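/- arXiv:2110.14905 — 4 statements merged into one kernel-verified Lean document; each statement's English description precedes it below -/
import Mathlib

section
/- Let X be a convex polyomino such that V(X) ⊆ ℕ² is a sublattice of ℕ² with minimum (0,0) and maximum (m,n). If X is not thin, then for any injective order-preserving map ω from JI(X) to ℕ, the number of maximal chains of V(X) with exactly 2 descents is strictly less than r_2, the number of 2-rook configurations in X; that is, |M_2(X)| < r_2. -/
/-!  Cells in ℤ² are identified with their top-right corners: the cell `C v`
is the unit square `[v.1 - 1, v.1] × [v.2 - 1, v.2] ⊆ ℝ²`. -/

/-- Two cells (identified by their top-right corners) are adjacent if they share an edge. -/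
def Adj (c d : ℤ × ℤ) : Prop :=
  (c.1 = d.1 ∧ (c.2 = d.2 + 1 ∨ d.2 = c.2 + 1)) ∨
  (c.2 = d.2 ∧ (c.1 = d.1 + 1 ∨ d.1 = c.1 + 1))

/-- A polyomino: a nonempty finite set of cells, connected under adjacency. -/
def IsPolyomino (X : Finset (ℤ × ℤ)) : Prop :=
  X.Nonempty ∧ ∀ c ∈ X, ∀ d ∈ X,
    Relation.ReflTransGen (fun a b => a ∈ X ∧ b ∈ X ∧ Adj a b) c d

/-- A polyomino is convex if it is both row-convex and column-convex. -/
def IsConvexPoly (X : Finset (ℤ × ℤ)) : Prop :=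
  (∀ a b x y : ℤ, (a, y) ∈ X → (b, y) ∈ X → a ≤ x → x ≤ b → (x, y) ∈ X) ∧
  (∀ a b x y : ℤ, (y, a) ∈ X → (y, b) ∈ X → a ≤ x → x ≤ b → (y, x) ∈ X)

/-- `X` is thin if it contains no 2 × 2 block of four cells. -/
def IsThin (X : Finset (ℤ × ℤ)) : Prop :=
  ¬ ∃ w : ℤ × ℤ, w ∈ X ∧ w + ((1, 0) : ℤ × ℤ) ∈ X ∧
    w + ((0, 1) : ℤ × ℤ) ∈ X ∧ w + ((1, 1) : ℤ × ℤ) ∈ X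

/-- `X` is `L`-convex: convex, and any two cells are joined by a monotone path of cells
of `X` changing direction (horizontal to vertical or vice versa) at most once. -/
def IsLConvexPoly (X : Finset (ℤ × ℤ)) : Prop :=
  IsConvexPoly X ∧ ∀ c ∈ X, ∀ d ∈ X,
    ((∀ x : ℤ, min c.1 d.1 ≤ x → x ≤ max c.1 d.1 → ((x, c.2) : ℤ × ℤ) ∈ X) ∧
     (∀ y : ℤ, min c.2 d.2 ≤ y → y ≤ max c.2 d.2 → ((d.1, y) : ℤ × ℤ) ∈ X)) ∨
    ((∀ y : ℤ, min c.2 d.2 ≤ y → y ≤ max c.2 d.2 → ((c.1, y) : ℤ × ℤ) ∈ X) ∧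
     (∀ x : ℤ, min c.1 d.1 ≤ x → x ≤ max c.1 d.1 → ((x, d.2) : ℤ × ℤ) ∈ X))

/-- The vertex set `V(X)`: all corners of cells of `X`, partially ordered componentwise. -/
def Verts (X : Finset (ℤ × ℤ)) : Set (ℤ × ℤ) :=
  {v | ∃ c ∈ X, v = c ∨ v = c - ((1, 0) : ℤ × ℤ) ∨
    v = c - ((0, 1) : ℤ × ℤ) ∨ v = c - ((1, 1) : ℤ × ℤ)}

/-- Setup: `V(X) ⊆ ℕ²` is a sublattice of `ℕ²` (closed under componentwise max and min)
with minimum `(0,0)` and maximum `(m,n)`. -/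
def LatticeSetup (X : Finset (ℤ × ℤ)) (m n : ℕ) : Prop :=
  (∀ a ∈ Verts X, ∀ b ∈ Verts X, a ⊔ b ∈ Verts X ∧ a ⊓ b ∈ Verts X) ∧
  ((0, 0) : ℤ × ℤ) ∈ Verts X ∧ (((m : ℤ), (n : ℤ)) : ℤ × ℤ) ∈ Verts X ∧
  ∀ v ∈ Verts X, ((0, 0) : ℤ × ℤ) ≤ v ∧ v ≤ (((m : ℤ), (n : ℤ)) : ℤ × ℤ)

/-- Join-irreducible elements of the lattice `V(X)`: nonminimal elements that are not
the join of two elements strictly below them. -/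
def JoinIrr (X : Finset (ℤ × ℤ)) : Set (ℤ × ℤ) :=
  {p | p ∈ Verts X ∧ (∃ q ∈ Verts X, q < p) ∧
    ∀ a ∈ Verts X, ∀ b ∈ Verts X, a < p → b < p → a ⊔ b ≠ p}

/-- `ω` is an injective order-preserving map from `JI(X)` to `ℕ`. -/
def OmegaOK (X : Finset (ℤ × ℤ)) (ω : ℤ × ℤ → ℕ) : Prop :=
  Set.InjOn ω (JoinIrr X) ∧
  ∀ p ∈ JoinIrr X, ∀ q ∈ JoinIrr X, p ≤ q → ω p ≤ ω q

/-- A maximal chain of `V(X)`, written as a monotone unit lattice path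
`μ 0 = (0,0) < μ 1 < ⋯ < μ (m+n) = (m,n)` through vertices of `X`
(normalized by `μ i = (m,n)` for `i ≥ m+n`). -/
def IsMaxChainPath (X : Finset (ℤ × ℤ)) (m n : ℕ) (μ : ℕ → ℤ × ℤ) : Prop :=
  μ 0 = (0, 0) ∧
  (∀ i, i < m + n → μ (i + 1) - μ i = ((1, 0) : ℤ × ℤ) ∨
    μ (i + 1) - μ i = ((0, 1) : ℤ × ℤ)) ∧
  (∀ i, m + n ≤ i → μ i = (((m : ℤ), (n : ℤ)) : ℤ × ℤ)) ∧
  (∀ i, i ≤ m + n → μ i ∈ Verts X)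

/-- `i` is a descent of the maximal chain `μ`:  `ω p_i > ω p_{i+1}`, where `p_j` is the
unique join-irreducible `p` with `p ≤ μ j` and `p ≰ μ (j-1)`. -/
def DescentAt (X : Finset (ℤ × ℤ)) (ω : ℤ × ℤ → ℕ) (μ : ℕ → ℤ × ℤ) (i : ℕ) : Prop :=
  ∃ p ∈ JoinIrr X, ∃ q ∈ JoinIrr X,
    p ≤ μ i ∧ ¬ p ≤ μ (i - 1) ∧ q ≤ μ (i + 1) ∧ ¬ q ≤ μ i ∧ ω q < ω p

/-- The descent set of a maximal chain: descents `i` with `1 ≤ i ≤ m+n-1`. -/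
def Des (X : Finset (ℤ × ℤ)) (m n : ℕ) (ω : ℤ × ℤ → ℕ) (μ : ℕ → ℤ × ℤ) : Set ℕ :=
  {i | 1 ≤ i ∧ i < m + n ∧ DescentAt X ω μ i}

/-- `|M_k(X)|`: the number of maximal chains of `V(X)` with exactly `k` descents. -/
noncomputable def numChains (X : Finset (ℤ × ℤ)) (m n : ℕ) (ω : ℤ × ℤ → ℕ) (k : ℕ) : ℕ :=
  Set.ncard {μ : ℕ → ℤ × ℤ | IsMaxChainPath X m n μ ∧ (Des X m n ω μ).ncard = k}

/-- A `k`-rook configuration in `X`: `k` cells of `X`, no two in the same row or column. -/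
def IsRookConfig (X : Finset (ℤ × ℤ)) (k : ℕ) (S : Finset (ℤ × ℤ)) : Prop :=
  ↑S ⊆ (↑X : Set (ℤ × ℤ)) ∧ S.card = k ∧
  ∀ c ∈ S, ∀ d ∈ S, c ≠ d → c.1 ≠ d.1 ∧ c.2 ≠ d.2

/-- `r_k`: the number of `k`-rook configurations in `X`. -/
noncomputable def rook (X : Finset (ℤ × ℤ)) (k : ℕ) : ℕ :=
  Set.ncard {S : Finset (ℤ × ℤ) | IsRookConfig X k S}

/-- The map `ψ`: sends a maximal chain `μ` to the set of cells `C (μ (i+1))` for `i ∈ Des μ`. -/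
def psi (X : Finset (ℤ × ℤ)) (m n : ℕ) (ω : ℤ × ℤ → ℕ) (μ : ℕ → ℤ × ℤ) :
    Set (ℤ × ℤ) :=
  (fun i => μ (i + 1)) '' Des X m n ω μ

/-- The ideal `I_X` of the polyomino ring: generated by the inner 2-minors
`x_a x_b - x_c x_d` for intervals `[a,b]` of `V(X)`. -/
noncomputable def polyominoIdeal (kk : Type*) [Field kk] (X : Finset (ℤ × ℤ)) :
    Ideal (MvPolynomial (Verts X) kk) :=
  Ideal.span {f | ∃ a b c d : Verts X,
    (a : ℤ × ℤ) < (b : ℤ × ℤ) ∧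
    (c : ℤ × ℤ) = (((a : ℤ × ℤ).1, (b : ℤ × ℤ).2) : ℤ × ℤ) ∧
    (d : ℤ × ℤ) = (((b : ℤ × ℤ).1, (a : ℤ × ℤ).2) : ℤ × ℤ) ∧
    f = MvPolynomial.X a * MvPolynomial.X b - MvPolynomial.X c * MvPolynomial.X d}

/-- `dim_k (k[X])_i`: the dimension of the degree-`i` graded component of `k[X] = R/I_X`,
realized as the image of the homogeneous degree-`i` part of `R` in the quotient. -/
noncomputable def hilbCoeff (kk : Type*) [Field kk] (X : Finset (ℤ × ℤ)) (i : ℕ) : ℕ :=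
  Module.finrank kk (Submodule.map
    (Ideal.Quotient.mkₐ kk (polyominoIdeal kk X)).toLinearMap
    (MvPolynomial.homogeneousSubmodule (Verts X) kk i))

/-- The Hilbert series `HS(t) = Σ_{i ≥ 0} dim_k (k[X])_i t^i ∈ ℤ[[t]]`. -/
noncomputable def hilbSeries (kk : Type*) [Field kk] (X : Finset (ℤ × ℤ)) :
    PowerSeries ℤ :=
  PowerSeries.mk fun i => (hilbCoeff kk X i : ℤ)

/-- The region `⋃ X ⊆ ℝ²` covered by the cells of `X`. -/
def Region (X : Finset (ℤ × ℤ)) : Set (ℝ × ℝ) :=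
  ⋃ c ∈ X, Set.Icc (((c.1 : ℝ) - 1, (c.2 : ℝ) - 1) : ℝ × ℝ) (((c.1 : ℝ), (c.2 : ℝ)) : ℝ × ℝ)

/-- Left-boundary vertices: top-left corners of cells of `X` lying on the topological
boundary of the region `⋃ X ⊆ ℝ²`. -/
def LeftBdry (X : Finset (ℤ × ℤ)) : Set (ℤ × ℤ) :=
  {v | (∃ c ∈ X, v = c - ((1, 0) : ℤ × ℤ)) ∧
    (((v.1 : ℝ), (v.2 : ℝ)) : ℝ × ℝ) ∈ frontier (Region X)}

/-- Bottom-boundary vertices: bottom-right corners of cells of `X` lying on the topological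
boundary of the region `⋃ X ⊆ ℝ²`. -/
def BottomBdry (X : Finset (ℤ × ℤ)) : Set (ℤ × ℤ) :=
  {v | (∃ c ∈ X, v = c - ((0, 1) : ℤ × ℤ)) ∧
    (((v.1 : ℝ), (v.2 : ℝ)) : ℝ × ℝ) ∈ frontier (Region X)}

/-!
The join-irreducibles of `V(X)` are the lowest vertices of its columns and the leftmost vertices
of its rows, so the join-irreducible added by a step of a maximal chain depends only on the column
(right step) or the row (up step) it enters, and `ω` increases along steps of equal direction.
Hence a descent sits at a turn, and comparing `ω` there shows that the lattice contains the whole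
unit square of the turn, whose cell lies in `X` by convexity. Descents are never consecutive, so
`ψ` maps a chain with two descents to two cells increasing in both coordinates, a 2-rook
configuration. `ψ` is injective: the cell of a descent and the order of the two labels there fix
the turn, and between descents a chain is the unique descent-free chain of its interval. The two
antidiagonal cells of a 2 × 2 block of `X` form a 2-rook configuration outside the image.
-/

theorem Relation.ReflTransGen.exists_rel_of_le_of_lt {α β : Type*} [LinearOrder β]
    {r : α → α → Prop} {c d : α} (h : Relation.ReflTransGen r c d) (f : α → β) {k : β}
    (hc : f c ≤ k) (hd : k < f d) : ∃ a b, r a b ∧ f a ≤ k ∧ k < f b := by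
  induction h with
  | refl => exact absurd hc hd.not_ge
  | @tail b _ _ hbd ih =>
    by_cases hb : f b ≤ k
    · exact ⟨_, _, hbd, hb, hd⟩
    · exact ih (not_le.1 hb)

theorem Monotone.exists_eq_and_lt_succ {β : Type*} [LinearOrder β] {g : ℕ → β}
    (hg : Monotone g) {k t : ℕ} (h : g k < g t) :
    ∃ l, k ≤ l ∧ l < t ∧ g l = g k ∧ g k < g (l + 1) := by
  induction t with
  | zero => exact absurd (hg (Nat.zero_le k)) h.not_ge
  | succ t ih =>
    by_cases ht : g k < g t
    · obtain ⟨l, hkl, hlt, hl⟩ := ih ht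
      exact ⟨l, hkl, hlt.trans (lt_add_one t), hl⟩
    · have hkt : k ≤ t := by
        by_contra! hkt
        exact h.not_ge (hg hkt)
      exact ⟨t, hkt, lt_add_one t, le_antisymm (not_lt.1 ht) (hg hkt), h⟩

section

variable {X : Finset (ℤ × ℤ)} {m n : ℕ} {ω : ℤ × ℤ → ℕ} {μ ν : ℕ → ℤ × ℤ}

lemma verts_nonneg (hX : LatticeSetup X m n) {w : ℤ × ℤ} (hw : w ∈ Verts X) :
    0 ≤ w.1 ∧ 0 ≤ w.2 :=
  (hX.2.2.2 w hw).1

lemma mem_verts_cases {x y : ℤ} (h : (x, y) ∈ Verts X) :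
    (x, y) ∈ X ∨ (x + 1, y) ∈ X ∨ (x, y + 1) ∈ X ∨ (x + 1, y + 1) ∈ X := by
  obtain ⟨⟨c₁, c₂⟩, hc, h | h | h | h⟩ := h <;>
    simp only [Prod.mk_sub_mk, Prod.mk.injEq] at h <;> obtain ⟨rfl, rfl⟩ := h <;> simp [hc]

-- Junk (`sInf ∅ = 0`) when the column, resp. row, contains no vertex.
noncomputable def colMin (X : Finset (ℤ × ℤ)) (x : ℤ) : ℤ × ℤ :=
  (x, sInf {y | (x, y) ∈ Verts X})

noncomputable def rowMin (X : Finset (ℤ × ℤ)) (y : ℤ) : ℤ × ℤ :=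
  (sInf {x | (x, y) ∈ Verts X}, y)

lemma colMin_mem (hX : LatticeSetup X m n) {v : ℤ × ℤ} (hv : v ∈ Verts X) :
    colMin X v.1 ∈ Verts X :=
  Int.csInf_mem (s := {y | (v.1, y) ∈ Verts X}) ⟨v.2, hv⟩
    ⟨0, fun _ hy => (verts_nonneg hX hy).2⟩

lemma rowMin_mem (hX : LatticeSetup X m n) {v : ℤ × ℤ} (hv : v ∈ Verts X) :
    rowMin X v.2 ∈ Verts X :=
  Int.csInf_mem (s := {x | (x, v.2) ∈ Verts X}) ⟨v.1, hv⟩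
    ⟨0, fun _ hx => (verts_nonneg hX hx).1⟩

lemma colMin_snd_le (hX : LatticeSetup X m n) {x y : ℤ} (h : (x, y) ∈ Verts X) :
    (colMin X x).2 ≤ y :=
  csInf_le (s := {y | (x, y) ∈ Verts X}) ⟨0, fun _ hy => (verts_nonneg hX hy).2⟩ h

lemma rowMin_fst_le (hX : LatticeSetup X m n) {x y : ℤ} (h : (x, y) ∈ Verts X) :
    (rowMin X y).1 ≤ x :=
  csInf_le (s := {x | (x, y) ∈ Verts X}) ⟨0, fun _ hx => (verts_nonneg hX hx).1⟩ h

lemma colMin_le (hX : LatticeSetup X m n) {v w : ℤ × ℤ} (hv : v ∈ Verts X)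
    (hw : w ∈ Verts X) (h : v.1 ≤ w.1) : colMin X v.1 ≤ w := by
  have hinf : (v.1, (colMin X v.1 ⊓ w).2) ∈ Verts X := by
    convert (hX.1 _ (colMin_mem hX hv) w hw).2 using 1
    exact Prod.ext (by simp [colMin, h]) rfl
  exact ⟨h, (colMin_snd_le hX hinf).trans inf_le_right⟩

lemma rowMin_le (hX : LatticeSetup X m n) {v w : ℤ × ℤ} (hv : v ∈ Verts X)
    (hw : w ∈ Verts X) (h : v.2 ≤ w.2) : rowMin X v.2 ≤ w := by
  have hinf : ((rowMin X v.2 ⊓ w).1, v.2) ∈ Verts X := by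
    convert (hX.1 _ (rowMin_mem hX hv) w hw).2 using 1
    exact Prod.ext rfl (by simp [rowMin, h])
  exact ⟨(rowMin_fst_le hX hinf).trans inf_le_right, h⟩

lemma colMin_mem_joinIrr (hX : LatticeSetup X m n) {v : ℤ × ℤ} (hv : v ∈ Verts X)
    (h1 : 1 ≤ v.1) : colMin X v.1 ∈ JoinIrr X := by
  have below : ∀ c ∈ Verts X, c < colMin X v.1 → c.1 < v.1 := fun c hc hlt =>
    lt_of_le_of_ne hlt.le.1 fun h1 => hlt.not_ge ⟨h1.ge, h1 ▸ colMin_snd_le hX hc⟩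
  refine ⟨colMin_mem hX hv, ⟨(0, 0), hX.2.1, ?_⟩, fun a ha b hb hab hbb hsup => ?_⟩
  · exact Prod.lt_iff.2 (Or.inl ⟨show (0 : ℤ) < v.1 by omega,
      (verts_nonneg hX (colMin_mem hX hv)).2⟩)
  · have : a.1 ⊔ b.1 = v.1 := congrArg Prod.fst hsup
    have := below a ha hab
    have := below b hb hbb
    omega

lemma rowMin_mem_joinIrr (hX : LatticeSetup X m n) {v : ℤ × ℤ} (hv : v ∈ Verts X)
    (h1 : 1 ≤ v.2) : rowMin X v.2 ∈ JoinIrr X := by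
  have below : ∀ c ∈ Verts X, c < rowMin X v.2 → c.2 < v.2 := fun c hc hlt =>
    lt_of_le_of_ne hlt.le.2 fun h2 => hlt.not_ge ⟨h2 ▸ rowMin_fst_le hX hc, h2.ge⟩
  refine ⟨rowMin_mem hX hv, ⟨(0, 0), hX.2.1, ?_⟩, fun a ha b hb hab hbb hsup => ?_⟩
  · exact Prod.lt_iff.2 (Or.inr ⟨(verts_nonneg hX (rowMin_mem hX hv)).1,
      show (0 : ℤ) < v.2 by omega⟩)
  · have : a.2 ⊔ b.2 = v.2 := congrArg Prod.snd hsup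
    have := below a ha hab
    have := below b hb hbb
    omega

lemma joinIrr_eq_colMin_or_rowMin (hX : LatticeSetup X m n) {p : ℤ × ℤ}
    (hp : p ∈ JoinIrr X) : p = colMin X p.1 ∨ p = rowMin X p.2 := by
  by_contra! h
  have hc := colMin_le hX hp.1 hp.1 le_rfl
  have hr := rowMin_le hX hp.1 hp.1 le_rfl
  refine hp.2.2 _ (colMin_mem hX hp.1) _ (rowMin_mem hX hp.1) (lt_of_le_of_ne hc h.1.symm)
    (lt_of_le_of_ne hr h.2.symm) ?_
  exact Prod.ext (by simp [colMin, hr.1]) (by simp [rowMin, hc.2])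

lemma omega_colMin_le (hX : LatticeSetup X m n) (hω : OmegaOK X ω) {v w : ℤ × ℤ}
    (hv : v ∈ Verts X) (hw : w ∈ Verts X) (h1 : 1 ≤ v.1) (h : v.1 ≤ w.1) :
    ω (colMin X v.1) ≤ ω (colMin X w.1) :=
  hω.2 _ (colMin_mem_joinIrr hX hv h1) _ (colMin_mem_joinIrr hX hw (h1.trans h))
    (colMin_le hX hv (colMin_mem hX hw) h)

lemma omega_rowMin_le (hX : LatticeSetup X m n) (hω : OmegaOK X ω) {v w : ℤ × ℤ}
    (hv : v ∈ Verts X) (hw : w ∈ Verts X) (h1 : 1 ≤ v.2) (h : v.2 ≤ w.2) :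
    ω (rowMin X v.2) ≤ ω (rowMin X w.2) :=
  hω.2 _ (rowMin_mem_joinIrr hX hv h1) _ (rowMin_mem_joinIrr hX hw (h1.trans h))
    (rowMin_le hX hv (rowMin_mem hX hw) h)

lemma mem_verts_of_omega_rowMin_lt (hX : LatticeSetup X m n) (hω : OmegaOK X ω) {a b : ℤ}
    (hu : (a, b) ∈ Verts X) (hw : (a + 1, b + 1) ∈ Verts X)
    (hlt : ω (rowMin X (b + 1)) < ω (colMin X (a + 1))) : (a, b + 1) ∈ Verts X := by
  have hr := rowMin_mem hX hw
  have hnn := verts_nonneg hX hu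
  have hra : (rowMin X (b + 1)).1 ≤ a := by
    by_contra! h
    exact hlt.not_ge (hω.2 _ (colMin_mem_joinIrr hX hw (by dsimp only; omega)) _
      (rowMin_mem_joinIrr hX hw (by dsimp only; omega)) (colMin_le hX hw hr (by dsimp only; omega)))
  convert (hX.1 _ hr _ hu).1 using 1
  exact Prod.ext (by simp [hra]) (by simp [rowMin])

lemma mem_verts_of_omega_colMin_lt (hX : LatticeSetup X m n) (hω : OmegaOK X ω) {a b : ℤ}
    (hu : (a, b) ∈ Verts X) (hw : (a + 1, b + 1) ∈ Verts X)
    (hlt : ω (colMin X (a + 1)) < ω (rowMin X (b + 1))) : (a + 1, b) ∈ Verts X := by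
  have hc := colMin_mem hX hw
  have hnn := verts_nonneg hX hu
  have hcb : (colMin X (a + 1)).2 ≤ b := by
    by_contra! h
    exact hlt.not_ge (hω.2 _ (rowMin_mem_joinIrr hX hw (by dsimp only; omega)) _
      (colMin_mem_joinIrr hX hw (by dsimp only; omega)) (rowMin_le hX hw hc (by dsimp only; omega)))
  convert (hX.1 _ hc _ hu).1 using 1
  exact Prod.ext (by simp [colMin]) (by simp [hcb])

lemma IsPolyomino.exists_vertical_pair (hX : IsPolyomino X) {x₁ x₂ y : ℤ}
    (h₁ : (x₁, y) ∈ X) (h₂ : (x₂, y + 1) ∈ X) : ∃ x, (x, y) ∈ X ∧ (x, y + 1) ∈ X := by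
  obtain ⟨⟨a₁, a₂⟩, ⟨b₁, b₂⟩, ⟨ha, hb, hadj⟩, hle, hlt⟩ :=
    (hX.2 _ h₁ _ h₂).exists_rel_of_le_of_lt Prod.snd le_rfl (lt_add_one y)
  obtain ⟨rfl, rfl, rfl⟩ : b₁ = a₁ ∧ a₂ = y ∧ b₂ = y + 1 := by
    simp only [Adj] at hadj hle hlt
    omega
  exact ⟨b₁, ha, hb⟩

lemma IsPolyomino.exists_horizontal_pair (hX : IsPolyomino X) {x y₁ y₂ : ℤ}
    (h₁ : (x, y₁) ∈ X) (h₂ : (x + 1, y₂) ∈ X) : ∃ y, (x, y) ∈ X ∧ (x + 1, y) ∈ X := by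
  obtain ⟨⟨a₁, a₂⟩, ⟨b₁, b₂⟩, ⟨ha, hb, hadj⟩, hle, hlt⟩ :=
    (hX.2 _ h₁ _ h₂).exists_rel_of_le_of_lt Prod.fst le_rfl (lt_add_one x)
  obtain ⟨rfl, rfl, rfl⟩ : b₂ = a₂ ∧ a₁ = x ∧ b₁ = x + 1 := by
    simp only [Adj] at hadj hle hlt
    omega
  exact ⟨b₂, ha, hb⟩

lemma cell_mem_of_corners (hX : IsPolyomino X) (hconv : IsConvexPoly X) {a b : ℤ}
    (h₁ : (a, b) ∈ Verts X) (h₂ : (a - 1, b) ∈ Verts X) (h₃ : (a, b - 1) ∈ Verts X)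
    (h₄ : (a - 1, b - 1) ∈ Verts X) : (a, b) ∈ X := by
  -- Convexity keeps the row and the column of the missing cell from straddling it, and
  -- connectivity of `X` always produces such a straddle.
  by_contra hZ
  have row : ∀ {x₁ x₂ y x}, (x₁, y) ∈ X → (x₂, y) ∈ X → x₁ ≤ x → x ≤ x₂ → (x, y) ∈ X :=
    fun h h' hl hr => hconv.1 _ _ _ _ h h' hl hr
  have col : ∀ {x y₁ y₂ y}, (x, y₁) ∈ X → (x, y₂) ∈ X → y₁ ≤ y → y ≤ y₂ → (x, y) ∈ X :=
    fun h h' hl hr => hconv.2 _ _ _ _ h h' hl hr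
  have hNE : (a + 1, b) ∈ X ∨ (a, b + 1) ∈ X ∨ (a + 1, b + 1) ∈ X := by
    simpa [hZ] using mem_verts_cases h₁
  have hNW : (a - 1, b) ∈ X ∨ (a - 1, b + 1) ∈ X ∨ (a, b + 1) ∈ X := by
    simpa [hZ] using mem_verts_cases h₂
  have hSE : (a, b - 1) ∈ X ∨ (a + 1, b - 1) ∈ X ∨ (a + 1, b) ∈ X := by
    simpa [hZ] using mem_verts_cases h₃
  have hSW : (a - 1, b - 1) ∈ X ∨ (a, b - 1) ∈ X ∨ (a - 1, b) ∈ X := by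
    simpa [hZ] using mem_verts_cases h₄
  have noN : (a, b + 1) ∉ X := by
    intro hN
    have noS : (a, b - 1) ∉ X := fun hS => hZ (col hS hN (by omega) (by omega))
    have noE : (a + 1, b) ∉ X := by
      intro hE
      have hSW' : (a - 1, b - 1) ∈ X := by
        rcases hSW with h | h | h
        exacts [h, absurd h noS, absurd (row h hE (by omega) (by omega)) hZ]
      obtain ⟨x, hx, hx'⟩ := hX.exists_vertical_pair hSW' (by simpa using hE)
      rcases le_or_gt x a with hxa | hxa
      · exact hZ (row (by simpa using hx') hE hxa (by omega))
      · exact noS (row hSW' hx (by omega) hxa.le)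
    have hSE' : (a + 1, b - 1) ∈ X := by
      rcases hSE with h | h | h
      exacts [absurd h noS, h, absurd h noE]
    obtain ⟨y, hy, hy'⟩ := hX.exists_horizontal_pair hN hSE'
    rcases le_or_gt y b with hyb | hyb
    · exact hZ (col hy hN hyb (by omega))
    · exact noE (col hSE' hy' (by omega) hyb.le)
  have noE : (a + 1, b) ∉ X := by
    intro hE
    have hNW' : (a - 1, b + 1) ∈ X := by
      rcases hNW with h | h | h
      exacts [absurd (row h hE (by omega) (by omega)) hZ, h, absurd h noN]
    obtain ⟨x, hx, hx'⟩ := hX.exists_vertical_pair hE hNW'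
    rcases le_or_gt x a with hxa | hxa
    · exact hZ (row hx hE hxa (by omega))
    · exact noN (row hNW' hx' (by omega) hxa.le)
  have hNE' : (a + 1, b + 1) ∈ X := by simpa [noN, noE] using hNE
  have hS : (a, b - 1) ∈ X := by
    rcases hSE with h | h | h
    exacts [h, absurd (col h hNE' (by omega) (by omega)) noE, absurd h noE]
  obtain ⟨y, hy, hy'⟩ := hX.exists_horizontal_pair hS hNE'
  rcases le_or_gt b y with hby | hby
  · exact hZ (col hS hy (by omega) hby)
  · exact noE (col hy' hNE' hby.le (by omega))

lemma IsMaxChainPath.step (hμ : IsMaxChainPath X m n μ) {i : ℕ} (hi : i < m + n) :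
    (μ (i + 1)).1 = (μ i).1 + 1 ∧ (μ (i + 1)).2 = (μ i).2 ∨
      (μ (i + 1)).1 = (μ i).1 ∧ (μ (i + 1)).2 = (μ i).2 + 1 := by
  rcases hμ.2.1 i hi with h | h <;>
  · have h1 := congrArg Prod.fst h
    have h2 := congrArg Prod.snd h
    simp only [Prod.fst_sub, Prod.snd_sub] at h1 h2
    omega

lemma IsMaxChainPath.mem (hX : LatticeSetup X m n) (hμ : IsMaxChainPath X m n μ) (i : ℕ) :
    μ i ∈ Verts X := by
  rcases le_or_gt i (m + n) with h | h
  · exact hμ.2.2.2 i h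
  · rw [hμ.2.2.1 i h.le]
    exact hX.2.2.1

lemma IsMaxChainPath.monotone (hμ : IsMaxChainPath X m n μ) : Monotone μ := by
  refine monotone_nat_of_le_succ fun i => ?_
  rcases lt_or_ge i (m + n) with h | h
  · rcases hμ.step h with ⟨h1, h2⟩ | ⟨h1, h2⟩ <;> exact ⟨by omega, by omega⟩
  · rw [hμ.2.2.1 i h, hμ.2.2.1 (i + 1) (by omega)]

lemma IsMaxChainPath.fst_add_snd (hμ : IsMaxChainPath X m n μ) {i : ℕ} (hi : i ≤ m + n) :
    (μ i).1 + (μ i).2 = i := by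
  induction i with
  | zero => simp [hμ.1]
  | succ i ih =>
    have := ih (by omega)
    rcases hμ.step hi with ⟨h1, h2⟩ | ⟨h1, h2⟩ <;> push_cast <;> omega

/-- The join-irreducible `p_i` of the paper, added by the step from `μ (i - 1)` to `μ i`. -/
noncomputable def stepJI (X : Finset (ℤ × ℤ)) (μ : ℕ → ℤ × ℤ) (i : ℕ) : ℤ × ℤ :=
  if (μ (i - 1)).1 < (μ i).1 then colMin X (μ i).1 else rowMin X (μ i).2

lemma stepJI_of_fst_lt {μ : ℕ → ℤ × ℤ} {i : ℕ} (h : (μ (i - 1)).1 < (μ i).1) :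
    stepJI X μ i = colMin X (μ i).1 :=
  if_pos h

lemma stepJI_of_fst_le {μ : ℕ → ℤ × ℤ} {i : ℕ} (h : (μ i).1 ≤ (μ (i - 1)).1) :
    stepJI X μ i = rowMin X (μ i).2 :=
  if_neg h.not_gt

lemma IsMaxChainPath.added_iff (hX : LatticeSetup X m n) (hμ : IsMaxChainPath X m n μ)
    {i : ℕ} (h1 : 1 ≤ i) (h2 : i ≤ m + n) {p : ℤ × ℤ} :
    (p ∈ JoinIrr X ∧ p ≤ μ i ∧ ¬ p ≤ μ (i - 1)) ↔ p = stepJI X μ i := by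
  have hu := hμ.mem hX (i - 1)
  have hv := hμ.mem hX i
  have hst := hμ.step (i := i - 1) (by omega)
  rw [Nat.sub_add_cancel h1] at hst
  have hnn := verts_nonneg hX hu
  unfold stepJI
  rcases hst with ⟨e1, e2⟩ | ⟨e1, e2⟩
  · rw [if_pos (by omega)]
    constructor
    · rintro ⟨hp, hpv, hpu⟩
      have hp1 : p.1 = (μ i).1 := by
        by_contra
        exact hpu ⟨by have := hpv.1; omega, by have := hpv.2; omega⟩
      rcases joinIrr_eq_colMin_or_rowMin hX hp with h | h
      · rwa [hp1] at h
      · exact absurd (h.trans_le (rowMin_le hX hp.1 hu (by have := hpv.2; omega))) hpu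
    · rintro rfl
      refine ⟨colMin_mem_joinIrr hX hv (by omega), colMin_le hX hv hv le_rfl, fun h => ?_⟩
      have : (μ i).1 ≤ (μ (i - 1)).1 := h.1
      omega
  · rw [if_neg (by omega)]
    constructor
    · rintro ⟨hp, hpv, hpu⟩
      have hp2 : p.2 = (μ i).2 := by
        by_contra
        exact hpu ⟨by have := hpv.1; omega, by have := hpv.2; omega⟩
      rcases joinIrr_eq_colMin_or_rowMin hX hp with h | h
      · exact absurd (h.trans_le (colMin_le hX hp.1 hu (by have := hpv.1; omega))) hpu
      · rwa [hp2] at h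
    · rintro rfl
      refine ⟨rowMin_mem_joinIrr hX hv (by omega), rowMin_le hX hv hv le_rfl, fun h => ?_⟩
      have : (μ i).2 ≤ (μ (i - 1)).2 := h.2
      omega

lemma IsMaxChainPath.descentAt_iff (hX : LatticeSetup X m n) (hμ : IsMaxChainPath X m n μ)
    {i : ℕ} (h1 : 1 ≤ i) (h2 : i < m + n) :
    DescentAt X ω μ i ↔ ω (stepJI X μ (i + 1)) < ω (stepJI X μ i) := by
  constructor
  · rintro ⟨p, hp, q, hq, hpi, hpi', hqi, hqi', hlt⟩
    rwa [← (hμ.added_iff hX h1 h2.le).1 ⟨hp, hpi, hpi'⟩,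
      ← (hμ.added_iff hX (i := i + 1) (by omega) h2).1 ⟨hq, hqi, hqi'⟩]
  · intro hlt
    obtain ⟨hp, hpi, hpi'⟩ := (hμ.added_iff hX h1 h2.le).2 rfl
    obtain ⟨hq, hqi, hqi'⟩ := (hμ.added_iff hX (i := i + 1) (by omega) h2).2 rfl
    exact ⟨_, hp, _, hq, hpi, hpi', hqi, hqi', hlt⟩

lemma IsMaxChainPath.descentAt_cases (hX : LatticeSetup X m n) (hω : OmegaOK X ω)
    (hμ : IsMaxChainPath X m n μ) {i : ℕ} (h1 : 1 ≤ i) (h2 : i < m + n) {a b : ℤ}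
    (hu : μ (i - 1) = (a, b)) (hd : DescentAt X ω μ i) :
    μ (i + 1) = (a + 1, b + 1) ∧
      (μ i = (a + 1, b) ∧ ω (rowMin X (b + 1)) < ω (colMin X (a + 1)) ∨
        μ i = (a, b + 1) ∧ ω (colMin X (a + 1)) < ω (rowMin X (b + 1))) := by
  have hs := hμ.step (i := i - 1) (by omega)
  rw [Nat.sub_add_cancel h1] at hs
  have hs' := hμ.step h2
  have ha : (μ (i - 1)).1 = a := by rw [hu]
  have hb : (μ (i - 1)).2 = b := by rw [hu]
  have hnn := verts_nonneg hX (hμ.mem hX (i - 1))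
  have hv := hμ.mem hX i
  have hw := hμ.mem hX (i + 1)
  rw [hμ.descentAt_iff hX h1 h2] at hd
  rcases hs with ⟨e1, e2⟩ | ⟨e1, e2⟩ <;> rcases hs' with ⟨e3, e4⟩ | ⟨e3, e4⟩
  · rw [stepJI_of_fst_lt (i := i + 1) (show (μ i).1 < (μ (i + 1)).1 by omega),
      stepJI_of_fst_lt (by omega)] at hd
    exact absurd hd (omega_colMin_le hX hω hv hw (by omega) (by omega)).not_gt
  · rw [stepJI_of_fst_le (i := i + 1) (show (μ (i + 1)).1 ≤ (μ i).1 by omega),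
      stepJI_of_fst_lt (by omega), e4, e2, e1, ha, hb] at hd
    exact ⟨Prod.ext (by dsimp only; omega) (by dsimp only; omega),
      .inl ⟨Prod.ext (by dsimp only; omega) (by dsimp only; omega), hd⟩⟩
  · rw [stepJI_of_fst_lt (i := i + 1) (show (μ i).1 < (μ (i + 1)).1 by omega),
      stepJI_of_fst_le (by omega), e3, e1, e2, ha, hb] at hd
    exact ⟨Prod.ext (by dsimp only; omega) (by dsimp only; omega),
      .inr ⟨Prod.ext (by dsimp only; omega) (by dsimp only; omega), hd⟩⟩
  · rw [stepJI_of_fst_le (i := i + 1) (show (μ (i + 1)).1 ≤ (μ i).1 by omega),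
      stepJI_of_fst_le (by omega)] at hd
    exact absurd hd (omega_rowMin_le hX hω hv hw (by omega) (by omega)).not_gt

lemma IsMaxChainPath.succ_eq_pred_add_of_descentAt (hX : LatticeSetup X m n)
    (hω : OmegaOK X ω) (hμ : IsMaxChainPath X m n μ) {i : ℕ} (h1 : 1 ≤ i) (h2 : i < m + n)
    (hd : DescentAt X ω μ i) : μ (i + 1) = μ (i - 1) + (1, 1) :=
  (hμ.descentAt_cases hX hω h1 h2 rfl hd).1

lemma IsMaxChainPath.pred_eq_of_descentAt (hX : LatticeSetup X m n) (hω : OmegaOK X ω)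
    (hμ : IsMaxChainPath X m n μ) (hν : IsMaxChainPath X m n ν) {i : ℕ} (h1 : 1 ≤ i)
    (h2 : i < m + n) (hdμ : DescentAt X ω μ i) (hdν : DescentAt X ω ν i)
    (he : μ (i + 1) = ν (i + 1)) : μ (i - 1) = ν (i - 1) :=
  add_right_cancel (b := ((1, 1) : ℤ × ℤ)) <| by
    rw [← hμ.succ_eq_pred_add_of_descentAt hX hω h1 h2 hdμ,
      ← hν.succ_eq_pred_add_of_descentAt hX hω h1 h2 hdν, he]

lemma IsMaxChainPath.mem_of_descentAt (hpoly : IsPolyomino X) (hconv : IsConvexPoly X)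
    (hX : LatticeSetup X m n) (hω : OmegaOK X ω) (hμ : IsMaxChainPath X m n μ) {i : ℕ}
    (h1 : 1 ≤ i) (h2 : i < m + n) (hd : DescentAt X ω μ i) : μ (i + 1) ∈ X := by
  obtain ⟨⟨a, b⟩, hu⟩ : ∃ u, μ (i - 1) = u := ⟨_, rfl⟩
  have hu' := hu ▸ hμ.mem hX (i - 1)
  obtain ⟨hw, hcases⟩ := hμ.descentAt_cases hX hω h1 h2 hu hd
  have hw' := hw ▸ hμ.mem hX (i + 1)
  have hside : (a + 1, b) ∈ Verts X ∧ (a, b + 1) ∈ Verts X := by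
    rcases hcases with ⟨hv, hlt⟩ | ⟨hv, hlt⟩
    · exact ⟨hv ▸ hμ.mem hX i, mem_verts_of_omega_rowMin_lt hX hω hu' hw' hlt⟩
    · exact ⟨mem_verts_of_omega_colMin_lt hX hω hu' hw' hlt, hv ▸ hμ.mem hX i⟩
  rw [hw]
  exact cell_mem_of_corners hpoly hconv hw' (by simpa using hside.2) (by simpa using hside.1)
    (by simpa using hu')

lemma IsMaxChainPath.not_descentAt_succ (hX : LatticeSetup X m n) (hω : OmegaOK X ω)
    (hμ : IsMaxChainPath X m n μ) {i : ℕ} (h1 : 1 ≤ i) (h2 : i + 1 < m + n)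
    (hd : DescentAt X ω μ i) : ¬ DescentAt X ω μ (i + 1) := by
  intro hd'
  obtain ⟨⟨a, b⟩, hu⟩ : ∃ u, μ (i - 1) = u := ⟨_, rfl⟩
  have hnn := verts_nonneg hX (hu ▸ hμ.mem hX (i - 1))
  obtain ⟨hw, hcases⟩ := hμ.descentAt_cases hX hω h1 (by omega) hu hd
  rcases hcases with ⟨hv, hlt⟩ | ⟨hv, hlt⟩
  · obtain ⟨hw', hcases'⟩ := hμ.descentAt_cases hX hω (i := i + 1) (by omega) h2 hv hd'
    rcases hcases' with ⟨hv', -⟩ | ⟨-, hlt'⟩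
    · simp [hw] at hv'
    · have := omega_colMin_le hX hω (hv ▸ hμ.mem hX i) (hw' ▸ hμ.mem hX (i + 1 + 1))
        (by dsimp only; omega) (by dsimp only; omega)
      dsimp only at this
      omega
  · obtain ⟨hw', hcases'⟩ := hμ.descentAt_cases hX hω (i := i + 1) (by omega) h2 hv hd'
    rcases hcases' with ⟨-, hlt'⟩ | ⟨hv', -⟩
    · have := omega_rowMin_le hX hω (hv ▸ hμ.mem hX i) (hw' ▸ hμ.mem hX (i + 1 + 1))
        (by dsimp only; omega) (by dsimp only; omega)
      dsimp only at this
      omega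
    · simp [hw] at hv'

lemma IsMaxChainPath.eq_of_descentAt (hX : LatticeSetup X m n) (hω : OmegaOK X ω)
    (hμ : IsMaxChainPath X m n μ) (hν : IsMaxChainPath X m n ν) {i : ℕ} (h1 : 1 ≤ i)
    (h2 : i < m + n) (he : μ (i - 1) = ν (i - 1)) (hdμ : DescentAt X ω μ i)
    (hdν : DescentAt X ω ν i) : μ i = ν i := by
  obtain ⟨⟨a, b⟩, hu⟩ : ∃ u, μ (i - 1) = u := ⟨_, rfl⟩
  obtain ⟨-, hμc⟩ := hμ.descentAt_cases hX hω h1 h2 hu hdμ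
  obtain ⟨-, hνc⟩ := hν.descentAt_cases hX hω h1 h2 (he.symm.trans hu) hdν
  rcases hμc with ⟨h, hlt⟩ | ⟨h, hlt⟩ <;> rcases hνc with ⟨h', hlt'⟩ | ⟨h', hlt'⟩ <;>
    first | exact h.trans h'.symm | omega

lemma IsMaxChainPath.exists_omega_colMin_le_rowMin (hX : LatticeSetup X m n)
    (hμ : IsMaxChainPath X m n μ) {k t : ℕ} {a b : ℤ} (ht : t ≤ m + n)
    (hk : μ k = (a, b)) (hk' : μ (k + 1) = (a + 1, b)) (hlt : b < (μ t).2)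
    (hnd : ∀ r, k < r → r < t → ¬ DescentAt X ω μ r) :
    ∃ x, a + 1 ≤ x ∧ (x, b) ∈ Verts X ∧ ω (colMin X x) ≤ ω (rowMin X (b + 1)) := by
  obtain ⟨l, hkl, hlt, hl, hl'⟩ :=
    (monotone_snd.comp hμ.monotone).exists_eq_and_lt_succ
      (k := k) (t := t) (by simpa [hk] using hlt)
  simp only [Function.comp_apply, hk] at hl hl'
  have hkl : k < l := lt_of_le_of_ne hkl fun h => by simp [← h, hk'] at hl'
  have hpre := hμ.monotone (show k ≤ l - 1 by omega)
  have hpost := hμ.monotone (show k + 1 ≤ l by omega)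
  rw [hk, Prod.le_def] at hpre
  rw [hk', Prod.le_def] at hpost
  have hsl := hμ.step (i := l - 1) (by omega)
  have hsl' := hμ.step (i := l) (by omega)
  rw [Nat.sub_add_cancel (by omega)] at hsl
  have hnd' := mt (hμ.descentAt_iff hX (by omega) (by omega)).2 (hnd l hkl hlt)
  rw [stepJI_of_fst_le (i := l + 1) (show (μ (l + 1)).1 ≤ (μ l).1 by omega),
    stepJI_of_fst_lt (show (μ (l - 1)).1 < (μ l).1 by omega)] at hnd'
  refine ⟨(μ l).1, hpost.1, ?_, ?_⟩
  · simpa [← hl] using hμ.mem hX l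
  · simpa [show (μ (l + 1)).2 = b + 1 by omega] using hnd'

lemma IsMaxChainPath.exists_omega_rowMin_le_colMin (hX : LatticeSetup X m n)
    (hμ : IsMaxChainPath X m n μ) {k t : ℕ} {a b : ℤ} (ht : t ≤ m + n)
    (hk : μ k = (a, b)) (hk' : μ (k + 1) = (a, b + 1)) (hlt : a < (μ t).1)
    (hnd : ∀ r, k < r → r < t → ¬ DescentAt X ω μ r) :
    ∃ y, b + 1 ≤ y ∧ (a, y) ∈ Verts X ∧ ω (rowMin X y) ≤ ω (colMin X (a + 1)) := by
  obtain ⟨l, hkl, hlt, hl, hl'⟩ :=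
    (monotone_fst.comp hμ.monotone).exists_eq_and_lt_succ
      (k := k) (t := t) (by simpa [hk] using hlt)
  simp only [Function.comp_apply, hk] at hl hl'
  have hkl : k < l := lt_of_le_of_ne hkl fun h => by simp [← h, hk'] at hl'
  have hpre := hμ.monotone (show k ≤ l - 1 by omega)
  have hpost := hμ.monotone (show k + 1 ≤ l by omega)
  rw [hk, Prod.le_def] at hpre
  rw [hk', Prod.le_def] at hpost
  have hsl := hμ.step (i := l - 1) (by omega)
  have hsl' := hμ.step (i := l) (by omega)
  rw [Nat.sub_add_cancel (by omega)] at hsl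
  have hnd' := mt (hμ.descentAt_iff hX (by omega) (by omega)).2 (hnd l hkl hlt)
  rw [stepJI_of_fst_lt (i := l + 1) (show (μ l).1 < (μ (l + 1)).1 by omega),
    stepJI_of_fst_le (show (μ l).1 ≤ (μ (l - 1)).1 by omega)] at hnd'
  refine ⟨(μ l).2, hpost.2, ?_, ?_⟩
  · simpa [← hl] using hμ.mem hX l
  · simpa [show (μ (l + 1)).1 = a + 1 by omega] using hnd'

lemma IsMaxChainPath.false_of_right_of_up (hX : LatticeSetup X m n) (hω : OmegaOK X ω)
    (hμ : IsMaxChainPath X m n μ) (hν : IsMaxChainPath X m n ν) {k t : ℕ} {a b : ℤ}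
    (hkt : k < t) (ht : t ≤ m + n) (hμk : μ k = (a, b)) (hμk' : μ (k + 1) = (a + 1, b))
    (hνk : ν k = (a, b)) (hνk' : ν (k + 1) = (a, b + 1)) (htt : μ t = ν t)
    (hnd : ∀ r, k < r → r < t → ¬ DescentAt X ω μ r ∧ ¬ DescentAt X ω ν r) : False := by
  have hμt := (hμ.monotone (show k + 1 ≤ t by omega)).1
  have hνt := (hν.monotone (show k + 1 ≤ t by omega)).2
  rw [hμk'] at hμt
  rw [hνk'] at hνt
  obtain ⟨x, hx, hxv, hωx⟩ := hμ.exists_omega_colMin_le_rowMin hX ht hμk hμk'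
    (by rw [htt]; exact hνt) fun r h h' => (hnd r h h').1
  obtain ⟨y, hy, hyv, hωy⟩ := hν.exists_omega_rowMin_le_colMin hX ht hνk hνk'
    (by rw [← htt]; exact hμt) fun r h h' => (hnd r h h').2
  -- `ω (colMin (a + 1)) ≤ ω (colMin x) ≤ ω (rowMin (b + 1)) ≤ ω (rowMin y) ≤ ω (colMin (a + 1))`,
  -- so `colMin x = rowMin (b + 1)`, which is impossible since `(x, b)` is a vertex.
  have hab := verts_nonneg hX (hμk ▸ hμ.mem hX k)
  have hcol := omega_colMin_le hX hω (hμk' ▸ hμ.mem hX (k + 1)) hxv (by dsimp only; omega) hx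
  have hrow := omega_rowMin_le hX hω (hνk' ▸ hν.mem hX (k + 1)) hyv (by dsimp only; omega) hy
  dsimp only at hcol hrow
  have hxJ : colMin X x ∈ JoinIrr X := colMin_mem_joinIrr hX hxv (by dsimp only; omega)
  have hyJ : rowMin X (b + 1) ∈ JoinIrr X :=
    rowMin_mem_joinIrr hX (hνk' ▸ hν.mem hX (k + 1)) (by dsimp only; omega)
  have heq : colMin X x = rowMin X (b + 1) := hω.1 hxJ hyJ (by omega)
  have := heq ▸ colMin_snd_le hX hxv
  simp [rowMin] at this

lemma IsMaxChainPath.succ_eq_of_forall_not_descentAt (hX : LatticeSetup X m n)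
    (hω : OmegaOK X ω) (hμ : IsMaxChainPath X m n μ) (hν : IsMaxChainPath X m n ν)
    {k t : ℕ} (hkt : k < t) (ht : t ≤ m + n) (hk : μ k = ν k) (htt : μ t = ν t)
    (hnd : ∀ r, k < r → r < t → ¬ DescentAt X ω μ r ∧ ¬ DescentAt X ω ν r) :
    μ (k + 1) = ν (k + 1) := by
  obtain ⟨⟨a, b⟩, hμk⟩ : ∃ u, μ k = u := ⟨_, rfl⟩
  have hνk := hk ▸ hμk
  have hμs := hμ.step (i := k) (by omega)
  have hνs := hν.step (i := k) (by omega)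
  rw [hμk] at hμs
  rw [hνk] at hνs
  rcases hμs with hμs | hμs <;> rcases hνs with hνs | hνs
  · exact Prod.ext (hμs.1.trans hνs.1.symm) (hμs.2.trans hνs.2.symm)
  · exact (hμ.false_of_right_of_up hX hω hν hkt ht hμk (Prod.ext hμs.1 hμs.2) hνk
      (Prod.ext hνs.1 hνs.2) htt hnd).elim
  · exact (hν.false_of_right_of_up hX hω hμ hkt ht hνk (Prod.ext hνs.1 hνs.2) hμk
      (Prod.ext hμs.1 hμs.2) htt.symm fun r h h' => (hnd r h h').symm).elim
  · exact Prod.ext (hμs.1.trans hνs.1.symm) (hμs.2.trans hνs.2.symm)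

lemma IsMaxChainPath.eqOn_of_forall_not_descentAt (hX : LatticeSetup X m n)
    (hω : OmegaOK X ω) (hμ : IsMaxChainPath X m n μ) (hν : IsMaxChainPath X m n ν)
    {s t : ℕ} (ht : t ≤ m + n) (hs : μ s = ν s) (htt : μ t = ν t)
    (hnd : ∀ r, s < r → r < t → ¬ DescentAt X ω μ r ∧ ¬ DescentAt X ω ν r) :
    Set.EqOn μ ν (Set.Icc s t) := by
  rintro r ⟨hsr, hrt⟩
  induction r, hsr using Nat.le_induction with
  | base => exact hs
  | succ r hsr ih =>
    exact hμ.succ_eq_of_forall_not_descentAt hX hω hν (by omega) ht (ih (by omega)) htt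
      fun r' h h' => hnd r' (by omega) h'

lemma IsMaxChainPath.exists_des_eq_pair (hX : LatticeSetup X m n) (hω : OmegaOK X ω)
    (hμ : IsMaxChainPath X m n μ) (h2 : (Des X m n ω μ).ncard = 2) :
    ∃ i j, Des X m n ω μ = {i, j} ∧ 1 ≤ i ∧ i + 2 ≤ j ∧ j < m + n := by
  obtain ⟨x, y, hxy, hD⟩ := Set.ncard_eq_two.1 h2
  wlog hlt : x < y generalizing x y
  · exact this y x hxy.symm (hD.trans (Set.pair_comm x y))
      (lt_of_le_of_ne (not_lt.1 hlt) hxy.symm)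
  have hx : x ∈ Des X m n ω μ := hD ▸ Set.mem_insert x {y}
  have hy : y ∈ Des X m n ω μ := hD ▸ Set.mem_insert_of_mem x rfl
  refine ⟨x, y, hD, hx.1, ?_, hy.2.1⟩
  by_contra! h
  obtain rfl : y = x + 1 := by omega
  exact hμ.not_descentAt_succ hX hω hx.1 hy.2.1 hx.2.2 hy.2.2

lemma IsMaxChainPath.eq_of_des_eq_pair (hX : LatticeSetup X m n) (hω : OmegaOK X ω)
    (hμ : IsMaxChainPath X m n μ) (hν : IsMaxChainPath X m n ν) {i j : ℕ}
    (hμD : Des X m n ω μ = {i, j}) (hνD : Des X m n ω ν = {i, j}) (hi : 1 ≤ i)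
    (hij : i + 2 ≤ j) (hj : j < m + n) (hi' : μ (i + 1) = ν (i + 1))
    (hj' : μ (j + 1) = ν (j + 1)) : μ = ν := by
  have hdes : ∀ r ∈ ({i, j} : Set ℕ), DescentAt X ω μ r ∧ DescentAt X ω ν r :=
    fun r hr => ⟨(hμD ▸ hr : r ∈ Des X m n ω μ).2.2, (hνD ▸ hr : r ∈ Des X m n ω ν).2.2⟩
  obtain ⟨hμi, hνi⟩ := hdes i (by simp)
  obtain ⟨hμj, hνj⟩ := hdes j (by simp)
  have hnd : ∀ r, 1 ≤ r → r < m + n → r ≠ i → r ≠ j →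
      ¬ DescentAt X ω μ r ∧ ¬ DescentAt X ω ν r := by
    intro r h1 h2 hri hrj
    have : r ∉ ({i, j} : Set ℕ) := by simp [hri, hrj]
    exact ⟨fun hd => this (hμD ▸ ⟨h1, h2, hd⟩), fun hd => this (hνD ▸ ⟨h1, h2, hd⟩)⟩
  have hi₀ := hμ.pred_eq_of_descentAt hX hω hν hi (by omega) hμi hνi hi'
  have hj₀ := hμ.pred_eq_of_descentAt hX hω hν (by omega) hj hμj hνj hj'
  have hend : μ (m + n) = ν (m + n) := (hμ.2.2.1 _ le_rfl).trans (hν.2.2.1 _ le_rfl).symm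
  have seg₁ := hμ.eqOn_of_forall_not_descentAt hX hω hν (by omega) (hμ.1.trans hν.1.symm) hi₀
    fun r h h' => hnd r (by omega) (by omega) (by omega) (by omega)
  have seg₂ := hμ.eqOn_of_forall_not_descentAt hX hω hν (by omega) hi' hj₀
    fun r h h' => hnd r (by omega) (by omega) (by omega) (by omega)
  have seg₃ := hμ.eqOn_of_forall_not_descentAt hX hω hν le_rfl hj' hend
    fun r h h' => hnd r (by omega) (by omega) (by omega) (by omega)
  have hii := hμ.eq_of_descentAt hX hω hν hi (by omega) hi₀ hμi hνi
  have hjj := hμ.eq_of_descentAt hX hω hν (by omega) hj hj₀ hμj hνj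
  funext r
  rcases lt_or_ge (m + n) r with hr | hr
  · rw [hμ.2.2.1 r hr.le, hν.2.2.1 r hr.le]
  obtain hr' | rfl | hr' | rfl | hr' :
      r ≤ i - 1 ∨ r = i ∨ (i + 1 ≤ r ∧ r ≤ j - 1) ∨ r = j ∨ j + 1 ≤ r := by omega
  · exact seg₁ ⟨Nat.zero_le r, hr'⟩
  · exact hii
  · exact seg₂ hr'
  · exact hjj
  · exact seg₃ ⟨hr', hr⟩

lemma IsMaxChainPath.exists_psi_eq_pair (hpoly : IsPolyomino X) (hconv : IsConvexPoly X)
    (hX : LatticeSetup X m n) (hω : OmegaOK X ω) (hμ : IsMaxChainPath X m n μ)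
    (h2 : (Des X m n ω μ).ncard = 2) :
    ∃ c d, psi X m n ω μ = {c, d} ∧ c ∈ X ∧ d ∈ X ∧ c.1 < d.1 ∧ c.2 < d.2 := by
  obtain ⟨i, j, hD, hi, hij, hj⟩ := hμ.exists_des_eq_pair hX hω h2
  have hdi := (hD ▸ Set.mem_insert i {j} : i ∈ Des X m n ω μ).2.2
  have hdj := (hD ▸ Set.mem_insert_of_mem i rfl : j ∈ Des X m n ω μ).2.2
  have hle := hμ.monotone (show i + 1 ≤ j - 1 by omega)
  have hjd := hμ.succ_eq_pred_add_of_descentAt hX hω (by omega) hj hdj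
  refine ⟨μ (i + 1), μ (j + 1), by rw [psi, hD, Set.image_pair],
    hμ.mem_of_descentAt hpoly hconv hX hω hi (by omega) hdi,
    hμ.mem_of_descentAt hpoly hconv hX hω (by omega) hj hdj, ?_, ?_⟩
  · rw [hjd]
    exact Int.lt_add_one_iff.2 hle.1
  · rw [hjd]
    exact Int.lt_add_one_iff.2 hle.2

def chainsWithDescents (X : Finset (ℤ × ℤ)) (m n : ℕ) (ω : ℤ × ℤ → ℕ) (k : ℕ) :
    Set (ℕ → ℤ × ℤ) :=
  {μ | IsMaxChainPath X m n μ ∧ (Des X m n ω μ).ncard = k}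

lemma psi_injOn (hX : LatticeSetup X m n) (hω : OmegaOK X ω) :
    Set.InjOn (psi X m n ω) (chainsWithDescents X m n ω 2) := by
  rintro μ ⟨hμ, hμ2⟩ ν ⟨hν, hν2⟩ hψ
  obtain ⟨i, j, hμD, hi, hij, hj⟩ := hμ.exists_des_eq_pair hX hω hμ2
  obtain ⟨i', j', hνD, hi', hij', hj'⟩ := hν.exists_des_eq_pair hX hω hν2
  rw [psi, psi, hμD, hνD, Set.image_pair, Set.image_pair] at hψ
  have hidx : ∀ {r r'}, r ≤ m + n → r' ≤ m + n → μ r = ν r' → r = r' := by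
    intro r r' hr hr' h
    have e := hμ.fst_add_snd hr
    rw [h, hν.fst_add_snd hr'] at e
    exact_mod_cast e.symm
  rcases Set.pair_eq_pair_iff.1 hψ with ⟨h1, h2⟩ | ⟨h1, h2⟩
  · obtain rfl : i = i' := by have := hidx (by omega) (by omega) h1; omega
    obtain rfl : j = j' := by have := hidx (by omega) (by omega) h2; omega
    exact hμ.eq_of_des_eq_pair hX hω hν hμD hνD hi hij hj h1 h2
  · have := hidx (by omega) (by omega) h1
    have := hidx (by omega) (by omega) h2
    omega

lemma isRookConfig_pair {c d : ℤ × ℤ} (hc : c ∈ X) (hd : d ∈ X) (h1 : c.1 ≠ d.1)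
    (h2 : c.2 ≠ d.2) : IsRookConfig X 2 {c, d} := by
  refine ⟨by simp [Set.insert_subset_iff, hc, hd],
    Finset.card_pair fun h => h1 (congrArg Prod.fst h), ?_⟩
  simp only [Finset.mem_insert, Finset.mem_singleton]
  rintro x (rfl | rfl) y (rfl | rfl) hxy
  exacts [absurd rfl hxy, ⟨h1, h2⟩, ⟨h1.symm, h2.symm⟩, absurd rfl hxy]

end

theorem rinaldo_romeo_M2_lt_r2 (X : Finset (ℤ × ℤ)) (m n : ℕ)
    (hpoly : IsPolyomino X) (hconv : IsConvexPoly X)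
    (hlat : LatticeSetup X m n)
    (hthin : ¬ IsThin X)
    (ω : ℤ × ℤ → ℕ) (hω : OmegaOK X ω) :
    numChains X m n ω 2 < rook X 2 := by
  obtain ⟨w, -, hw₁, hw₂, -⟩ := not_not.1 hthin
  set R : Set (Set (ℤ × ℤ)) :=
    (fun S : Finset (ℤ × ℤ) => (S : Set (ℤ × ℤ))) '' {S | IsRookConfig X 2 S}
  have hfin : R.Finite :=
    (X.powerset.finite_toSet.subset fun S hS => Finset.mem_powerset.2 hS.1).image _
  set S₀ : Set (ℤ × ℤ) := {w + (1, 0), w + (0, 1)}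
  have hS₀ : S₀ ∈ R :=
    ⟨{w + (1, 0), w + (0, 1)}, isRookConfig_pair hw₁ hw₂ (by simp) (by simp), by simp [S₀]⟩
  have hmaps : Set.MapsTo (psi X m n ω) (chainsWithDescents X m n ω 2) (R \ {S₀}) := by
    rintro μ ⟨hμ, hμ2⟩
    obtain ⟨c, d, hψ, hc, hd, h1, h2⟩ := hμ.exists_psi_eq_pair hpoly hconv hlat hω hμ2
    refine ⟨⟨{c, d}, isRookConfig_pair hc hd h1.ne h2.ne, by simp [hψ]⟩, fun h => ?_⟩
    rcases Set.pair_eq_pair_iff.1 (hψ ▸ h : ({c, d} : Set (ℤ × ℤ)) = S₀) with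
      ⟨rfl, rfl⟩ | ⟨rfl, rfl⟩ <;> simp at h1 h2
  calc numChains X m n ω 2 = (psi X m n ω '' chainsWithDescents X m n ω 2).ncard :=
        (psi_injOn hlat hω).ncard_image.symm
    _ ≤ (R \ {S₀}).ncard := Set.ncard_le_ncard hmaps.image_subset hfin.sdiff
    _ < R.ncard := Set.ncard_sdiff_singleton_lt_of_mem hS₀ hfin
    _ = rook X 2 := Set.ncard_image_of_injective _ Finset.coe_injective
end

section
/- Let X be a convex polyomino such that V(X) ⊆ ℕ² is a sublattice of ℕ² with minimum (0,0) and maximum (m,n), and fix an injective order-preserving map ω from JI(X) to ℕ. If μ is a maximal chain of V(X) and i ∈ Des(μ), then i+1 ∉ Des(μ); in other words, no maximal chain has two consecutive descents. -/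
/-! In the lattice `V(X)`, the join-irreducible `p` added by a horizontal step `v → u` of a
maximal chain is the lowest vertex of its column: a lower vertex `r` would give
`p = r ⊔ (p ⊓ v)`. Hence `p ≤ q` for every vertex `q` weakly to the right of `u`, and likewise
for vertical steps and rows. So the join-irreducibles added by two steps in the same direction
are ordered like the steps, and `ω` does not descend between them. Of three consecutive steps
two have the same direction, which excludes two consecutive descents. -/

lemma eq_or_eq_or_eq_of_eq_or_eq {α : Type*} {a b x y z : α} (hx : x = a ∨ x = b)
    (hy : y = a ∨ y = b) (hz : z = a ∨ z = b) : x = y ∨ y = z ∨ x = z := by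
  rcases hx with rfl | rfl <;> rcases hy with rfl | rfl <;> rcases hz with rfl | rfl <;> simp

section StepLemmas

variable {S : Set (ℤ × ℤ)} {p q u v : ℤ × ℤ}

lemma fst_eq_of_step_right (hstep : u - v = (1, 0)) (hpu : p ≤ u) (hpv : ¬ p ≤ v) :
    p.1 = u.1 := by
  obtain ⟨h1, h2⟩ := Prod.ext_iff.mp hstep
  simp only [Prod.fst_sub, Prod.snd_sub] at h1 h2
  by_contra h
  exact hpv ⟨by have := hpu.1; omega, by have := hpu.2; omega⟩

lemma snd_eq_of_step_up (hstep : u - v = (0, 1)) (hpu : p ≤ u) (hpv : ¬ p ≤ v) :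
    p.2 = u.2 :=
  fst_eq_of_step_right (p := p.swap) (congrArg Prod.swap hstep) (Prod.swap_le_swap.mpr hpu)
    (mt Prod.swap_le_swap.mp hpv)

lemma le_of_step_right (hS : InfClosed S) (hpS : p ∈ S)
    (hirr : ∀ a ∈ S, ∀ b ∈ S, a < p → b < p → a ⊔ b ≠ p) (hv : v ∈ S)
    (hstep : u - v = (1, 0)) (hpu : p ≤ u) (hpv : ¬ p ≤ v)
    (hqS : q ∈ S) (huq : u.1 ≤ q.1) : p ≤ q := by
  obtain ⟨h1, h2⟩ := Prod.ext_iff.mp hstep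
  simp only [Prod.fst_sub, Prod.snd_sub] at h1 h2
  have hp1 := fst_eq_of_step_right hstep hpu hpv
  have hp2 := hpu.2
  have hlowest : ∀ r ∈ S, r.1 = p.1 → p.2 ≤ r.2 := by
    intro r hr hr1
    by_contra! hrp
    refine hirr r hr (p ⊓ v) (hS hpS hv) ⟨⟨hr1.le, hrp.le⟩, fun h => (not_le.mpr hrp) h.2⟩
      ⟨inf_le_left, fun h => by have := (h.trans inf_le_right).1; omega⟩ ?_
    ext <;> simp <;> omega
  have := hlowest (p ⊓ q) (hS hpS hqS) (by simp; omega)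
  exact ⟨by omega, this.trans (inf_le_right : p ⊓ q ≤ q).2⟩

lemma le_of_step_up (hS : InfClosed S) (hpS : p ∈ S)
    (hirr : ∀ a ∈ S, ∀ b ∈ S, a < p → b < p → a ⊔ b ≠ p) (hv : v ∈ S)
    (hstep : u - v = (0, 1)) (hpu : p ≤ u) (hpv : ¬ p ≤ v)
    (hqS : q ∈ S) (huq : u.2 ≤ q.2) : p ≤ q := by
  have hirr' : ∀ a ∈ Prod.swap ⁻¹' S, ∀ b ∈ Prod.swap ⁻¹' S,
      a < p.swap → b < p.swap → a ⊔ b ≠ p.swap := fun a ha b hb hap hbp h =>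
    hirr a.swap ha b.swap hb (Prod.swap_lt_swap.mp hap) (Prod.swap_lt_swap.mp hbp)
      (congrArg Prod.swap h)
  exact Prod.swap_le_swap.mp <|
    le_of_step_right (S := Prod.swap ⁻¹' S) (fun a ha b hb => hS ha hb) (by simpa using hpS)
      hirr' (by simpa using hv) (congrArg Prod.swap hstep) (Prod.swap_le_swap.mpr hpu)
      (mt Prod.swap_le_swap.mp hpv) (by simpa using hqS) huq

end StepLemmas

namespace IsMaxChainPath

variable {X : Finset (ℤ × ℤ)} {m n : ℕ} {μ : ℕ → ℤ × ℤ}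

lemma monotone_s5 (hμ : IsMaxChainPath X m n μ) : Monotone μ := by
  refine monotone_nat_of_le_succ fun i => ?_
  by_cases hi : i < m + n
  · rcases hμ.2.1 i hi with h | h <;> rw [← sub_nonneg, h] <;> decide
  · rw [hμ.2.2.1 i (by omega), hμ.2.2.1 (i + 1) (by omega)]

lemma le_of_step_eq (hμ : IsMaxChainPath X m n μ) (hinf : InfClosed (Verts X)) {j k : ℕ}
    (hjk : j ≤ k) (hk : k < m + n) (hdir : μ (j + 1) - μ j = μ (k + 1) - μ k)
    {p q : ℤ × ℤ} (hp : p ∈ JoinIrr X) (hq : q ∈ JoinIrr X)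
    (hpj : p ≤ μ (j + 1)) (hpj' : ¬ p ≤ μ j)
    (hqk : q ≤ μ (k + 1)) (hqk' : ¬ q ≤ μ k) : p ≤ q := by
  have hvj := hμ.2.2.2 j (by omega)
  have hμjk := hμ.monotone_s5 (Nat.succ_le_succ hjk)
  rcases hμ.2.1 j (by omega) with h | h
  · exact le_of_step_right hinf hp.1 hp.2.2 hvj h hpj hpj' hq.1
      (hμjk.1.trans (fst_eq_of_step_right (hdir ▸ h) hqk hqk').ge)
  · exact le_of_step_up hinf hp.1 hp.2.2 hvj h hpj hpj' hq.1
      (hμjk.2.trans (snd_eq_of_step_up (hdir ▸ h) hqk hqk').ge)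

end IsMaxChainPath

theorem no_consecutive_descents_general (X : Finset (ℤ × ℤ)) (m n : ℕ)
    (hlat : LatticeSetup X m n)
    (ω : ℤ × ℤ → ℕ) (hω : OmegaOK X ω)
    (μ : ℕ → ℤ × ℤ) (hμ : IsMaxChainPath X m n μ)
    (i : ℕ) (hi : i ∈ Des X m n ω μ) :
    i + 1 ∉ Des X m n ω μ := by
  obtain ⟨hi1, hi2, p, hp, q, hq, hpi, hpi', hqi, hqi', hqp⟩ := hi
  rintro ⟨-, hi2', p', hp', q', hq', hp'i, hp'i', hq'i, hq'i', hq'p'⟩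
  obtain ⟨j, rfl⟩ : ∃ j, i = j + 1 := ⟨i - 1, by omega⟩
  simp only [Nat.add_sub_cancel] at hpi' hp'i'
  have hinf : InfClosed (Verts X) := fun a ha b hb => (hlat.1 a ha b hb).2
  have hle := @IsMaxChainPath.le_of_step_eq X m n μ hμ hinf
  have hqp' : q = p' :=
    le_antisymm (hle le_rfl (by omega) rfl hq hp' hqi hqi' hp'i hp'i')
      (hle le_rfl (by omega) rfl hp' hq hp'i hp'i' hqi hqi')
  subst hqp'
  rcases eq_or_eq_or_eq_of_eq_or_eq (hμ.2.1 j (by omega)) (hμ.2.1 (j + 1) (by omega))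
    (hμ.2.1 (j + 2) (by omega)) with h | h | h
  · have := hω.2 p hp q hq (hle (by omega) (by omega) h hp hq hpi hpi' hqi hqi'); omega
  · have := hω.2 q hq q' hq' (hle (by omega) (by omega) h hq hq' hqi hqi' hq'i hq'i'); omega
  · have := hω.2 p hp q' hq' (hle (by omega) (by omega) h hp hq' hpi hpi' hq'i hq'i'); omega

theorem no_consecutive_descents (X : Finset (ℤ × ℤ)) (m n : ℕ)
    (hpoly : IsPolyomino X) (hconv : IsConvexPoly X)
    (hlat : LatticeSetup X m n)
    (ω : ℤ × ℤ → ℕ) (hω : OmegaOK X ω)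
    (μ : ℕ → ℤ × ℤ) (hμ : IsMaxChainPath X m n μ)
    (i : ℕ) (hi : i ∈ Des X m n ω μ) :
    i + 1 ∉ Des X m n ω μ :=
  no_consecutive_descents_general X m n hlat ω hω μ hμ i hi
end

section
/- Let X be a convex polyomino such that V(X) ⊆ ℕ² is a sublattice of ℕ² with minimum (0,0) and maximum (m,n), and fix an injective order-preserving map ω from JI(X) to ℕ. The map ψ from the set of maximal chains of V(X) to subsets of C(X) is injective: if μ and ν are maximal chains of V(X) with ψ(μ) = ψ(ν), then μ = ν. -/
section PsiAux
variable {X : Finset (ℤ × ℤ)} {m n : ℕ}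

lemma step_comp {a b : ℤ×ℤ} {d1 d2 : ℤ} (h : a - b = (d1,d2)) :
    a.1 = b.1 + d1 ∧ a.2 = b.2 + d2 := by
  have h1 : a.1 - b.1 = d1 := congrArg Prod.fst h
  have h2 : a.2 - b.2 = d2 := congrArg Prod.snd h
  omega

lemma pt_eq {a : ℤ×ℤ} {e f : ℤ} (h1 : a.1 = e) (h2 : a.2 = f) : a = (e,f) := by
  rw [← h1, ← h2]

lemma mk_lt_mk' {a b c d : ℤ} (h1 : a ≤ c) (h2 : b ≤ d) (h3 : a < c ∨ b < d) :
    ((a,b) : ℤ×ℤ) < (c,d) := by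
  refine lt_of_le_of_ne (Prod.mk_le_mk.2 ⟨h1, h2⟩) ?_
  intro hcon; rw [Prod.mk.injEq] at hcon; omega

lemma sup_mk' (a b c d e f : ℤ) (h1 : max a c = e) (h2 : max b d = f) :
    ((a,b) : ℤ×ℤ) ⊔ (c,d) = (e,f) := by
  show ((max a c, max b d) : ℤ×ℤ) = (e,f); rw [h1, h2]

lemma inf_mk' (a b c d e f : ℤ) (h1 : min a c = e) (h2 : min b d = f) :
    ((a,b) : ℤ×ℤ) ⊓ (c,d) = (e,f) := by
  show ((min a c, min b d) : ℤ×ℤ) = (e,f); rw [h1, h2]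

lemma colMin_s6 (hlat : LatticeSetup X m n) {x y : ℤ} (h : (x,y) ∈ Verts X) :
    ∃ t : ℤ, (x,t) ∈ Verts X ∧ t ≤ y ∧ ∀ s, (x,s) ∈ Verts X → t ≤ s := by
  obtain ⟨t, htV, hmin⟩ := Int.exists_least_of_bdd (P := fun t => (x,t) ∈ Verts X)
    ⟨0, fun z hz => ((hlat.2.2.2 _ hz).1).2⟩ ⟨y, h⟩
  exact ⟨t, htV, hmin y h, hmin⟩

lemma rowMin_s6 (hlat : LatticeSetup X m n) {x y : ℤ} (h : (x,y) ∈ Verts X) :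
    ∃ s : ℤ, (s,y) ∈ Verts X ∧ s ≤ x ∧ ∀ u, (u,y) ∈ Verts X → s ≤ u := by
  obtain ⟨s, hsV, hmin⟩ := Int.exists_least_of_bdd (P := fun s => (s,y) ∈ Verts X)
    ⟨0, fun z hz => ((hlat.2.2.2 _ hz).1).1⟩ ⟨x, h⟩
  exact ⟨s, hsV, hmin x h, hmin⟩

lemma labelH_eq (hlat : LatticeSetup X m n) {x y t : ℤ} (hxy : (x,y) ∈ Verts X)
    (htV : (x+1,t) ∈ Verts X) (htmin : ∀ s, (x+1,s) ∈ Verts X → t ≤ s)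
    {p : ℤ×ℤ} (hp : p ∈ JoinIrr X) (hle : p ≤ (x+1,y)) (hnle : ¬ p ≤ (x,y)) :
    p = (x+1, t) := by
  obtain ⟨hpV, -, hirr⟩ := hp
  obtain ⟨p1, p2⟩ := p
  rw [Prod.mk_le_mk] at hle hnle
  push_neg at hnle
  have h1 : p1 = x + 1 := by
    rcases le_or_gt p1 x with h | h
    · exact absurd (hnle h) (by omega)
    · omega
  subst h1
  have ht2 : t ≤ p2 := htmin _ hpV
  rcases eq_or_lt_of_le ht2 with h | h
  · simp [← h]
  · exfalso
    have haV : ((x, p2) : ℤ×ℤ) ∈ Verts X := by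
      have h2 := (hlat.1 _ hpV _ hxy).2
      rwa [inf_mk' _ _ _ _ x p2 (by omega) (by omega)] at h2
    exact hirr _ haV _ htV (mk_lt_mk' (by omega) le_rfl (by omega))
      (mk_lt_mk' le_rfl (by omega) (by omega))
      (sup_mk' _ _ _ _ _ _ (by omega) (by omega))

lemma labelV_eq (hlat : LatticeSetup X m n) {x y s : ℤ} (hxy : (x,y) ∈ Verts X)
    (hsV : (s,y+1) ∈ Verts X) (hsmin : ∀ u, (u,y+1) ∈ Verts X → s ≤ u)
    {p : ℤ×ℤ} (hp : p ∈ JoinIrr X) (hle : p ≤ (x,y+1)) (hnle : ¬ p ≤ (x,y)) :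
    p = (s, y+1) := by
  obtain ⟨hpV, -, hirr⟩ := hp
  obtain ⟨p1, p2⟩ := p
  rw [Prod.mk_le_mk] at hle hnle
  push_neg at hnle
  have h2 : p2 = y + 1 := by have := hnle hle.1; omega
  subst h2
  have hs1 : s ≤ p1 := hsmin _ hpV
  rcases eq_or_lt_of_le hs1 with h | h
  · simp [← h]
  · exfalso
    have haV : ((p1, y) : ℤ×ℤ) ∈ Verts X := by
      have hh := (hlat.1 _ hpV _ hxy).2
      rwa [inf_mk' _ _ _ _ p1 y (by omega) (by omega)] at hh
    exact hirr _ haV _ hsV (mk_lt_mk' le_rfl (by omega) (by omega))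
      (mk_lt_mk' (by omega) le_rfl (by omega))
      (sup_mk' _ _ _ _ _ _ (by omega) (by omega))

lemma labelH_JI (hlat : LatticeSetup X m n) {x y t : ℤ} (hxy : (x,y) ∈ Verts X)
    (hx1 : (x+1,y) ∈ Verts X)
    (htV : (x+1,t) ∈ Verts X) (htmin : ∀ s, (x+1,s) ∈ Verts X → t ≤ s) :
    ((x+1,t) : ℤ×ℤ) ∈ JoinIrr X ∧ ((x+1,t) : ℤ×ℤ) ≤ (x+1,y) ∧ ¬ ((x+1,t) : ℤ×ℤ) ≤ (x,y) := by
  have hty : t ≤ y := htmin _ hx1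
  refine ⟨⟨htV, ⟨(x,t), ?_, mk_lt_mk' (by omega) le_rfl (by omega)⟩, ?_⟩,
    Prod.mk_le_mk.2 ⟨le_rfl, hty⟩, by rw [Prod.mk_le_mk]; push_neg; intro h; omega⟩
  · have h2 := (hlat.1 _ htV _ hxy).2
    rwa [inf_mk' _ _ _ _ x t (by omega) (by omega)] at h2
  · rintro ⟨a1,a2⟩ haV ⟨b1,b2⟩ hbV ha hb hab
    rw [Prod.lt_iff] at ha hb
    rw [sup_mk' a1 a2 b1 b2 (max a1 b1) (max a2 b2) rfl rfl, Prod.mk.injEq] at hab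
    simp only [Prod.mk_le_mk, Prod.mk_lt_mk] at ha hb
    have : a1 = x+1 ∨ b1 = x+1 := by omega
    rcases this with h | h
    · subst h; have := htmin _ haV; omega
    · subst h; have := htmin _ hbV; omega


lemma labelV_JI (hlat : LatticeSetup X m n) {x y s : ℤ} (hxy : (x,y) ∈ Verts X)
    (hx1 : (x,y+1) ∈ Verts X)
    (hsV : (s,y+1) ∈ Verts X) (hsmin : ∀ u, (u,y+1) ∈ Verts X → s ≤ u) :
    ((s,y+1) : ℤ×ℤ) ∈ JoinIrr X ∧ ((s,y+1) : ℤ×ℤ) ≤ (x,y+1) ∧ ¬ ((s,y+1) : ℤ×ℤ) ≤ (x,y) := by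
  have hsx : s ≤ x := hsmin _ hx1
  refine ⟨⟨hsV, ⟨(s,y), ?_, mk_lt_mk' le_rfl (by omega) (by omega)⟩, ?_⟩,
    Prod.mk_le_mk.2 ⟨hsx, le_rfl⟩, by rw [Prod.mk_le_mk]; push_neg; intro h; omega⟩
  · have h2 := (hlat.1 _ hsV _ hxy).2
    rwa [inf_mk' _ _ _ _ s y (by omega) (by omega)] at h2
  · rintro ⟨a1,a2⟩ haV ⟨b1,b2⟩ hbV ha hb hab
    rw [sup_mk' a1 a2 b1 b2 (max a1 b1) (max a2 b2) rfl rfl, Prod.mk.injEq] at hab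
    simp only [Prod.mk_lt_mk, Prod.mk_le_mk] at ha hb
    have : a2 = y+1 ∨ b2 = y+1 := by omega
    rcases this with h | h
    · subst h; have := hsmin _ haV; omega
    · subst h; have := hsmin _ hbV; omega


section Chain
variable {μ ν : ℕ → ℤ×ℤ} {ω : ℤ×ℤ → ℕ}

lemma chain_mono (hμ : IsMaxChainPath X m n μ) :
    ∀ k l, k ≤ l → l ≤ m + n → μ k ≤ μ l := by
  intro k l hkl hl
  induction l, hkl using Nat.le_induction with
  | base => exact le_refl _
  | succ l hkl ih =>
    refine le_trans (ih (by omega)) ?_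
    rcases hμ.2.1 l (by omega) with h | h <;>
    · obtain ⟨h1, h2⟩ := step_comp h
      exact Prod.le_def.2 ⟨by omega, by omega⟩

lemma chain_coordsum (hμ : IsMaxChainPath X m n μ) :
    ∀ l, l ≤ m + n → (μ l).1 + (μ l).2 = (l : ℤ) := by
  intro l hl
  induction l with
  | zero => rw [hμ.1]; simp
  | succ l ih =>
    rcases hμ.2.1 l (by omega) with h | h <;>
    · obtain ⟨h1, h2⟩ := step_comp h
      have := ih (by omega)
      push_cast
      omega

lemma straight_no_descent (hlat : LatticeSetup X m n) (hω : OmegaOK X ω)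
    (hμ : IsMaxChainPath X m n μ) {k : ℕ} (hk2 : k + 2 ≤ m + n)
    (hdir : μ (k+1) - μ k = μ (k+2) - μ (k+1)) : ¬ DescentAt X ω μ (k+1) := by
  rintro ⟨p, hpJI, q, hqJI, hple, hpnle, hqle, hqnle, hlt⟩
  simp only [Nat.add_sub_cancel] at hpnle
  rw [show k + 1 + 1 = k + 2 from rfl] at hqle
  have h0V := hμ.2.2.2 k (by omega)
  have h1V := hμ.2.2.2 (k+1) (by omega)
  have h2V := hμ.2.2.2 (k+2) (by omega)
  set x := (μ k).1 with hx
  set y := (μ k).2 with hy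
  have hd1 := hμ.2.1 k (by omega)
  rcases hd1 with h | h
  · -- both horizontal
    obtain ⟨e1, e2⟩ := step_comp h
    obtain ⟨f1, f2⟩ := step_comp (hdir ▸ h)
    -- μ (k+1) = (x+1, y), μ (k+2) = (x+2, y)
    obtain ⟨hpV, -, hirr⟩ := id hpJI
    obtain ⟨p1, p2⟩ := p
    obtain ⟨q1, q2⟩ := q
    have hple' : p1 ≤ x + 1 ∧ p2 ≤ y := by
      have := Prod.le_def.1 hple; constructor <;> omega
    have hpnle' : ¬ (p1 ≤ x ∧ p2 ≤ y) := by
      intro hc; exact hpnle (Prod.le_def.2 ⟨by omega, by omega⟩)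
    have hq1 : q1 = x + 2 ∧ q2 ≤ y := by
      have h1 := Prod.le_def.1 hqle
      have h2 : ¬ (q1 ≤ x + 1 ∧ q2 ≤ y) := fun hc => hqnle (Prod.le_def.2 ⟨by omega, by omega⟩)
      constructor <;> omega
    have hp1 : p1 = x + 1 := by omega
    rcases le_or_gt p2 q2 with hpq | hpq
    · have : ((p1,p2) : ℤ×ℤ) ≤ (q1,q2) := Prod.mk_le_mk.2 ⟨by omega, hpq⟩
      have := hω.2 _ hpJI _ hqJI this
      omega
    · -- q2 < p2 : contradiction with join-irreducibility of p
      have haV : ((x, p2) : ℤ×ℤ) ∈ Verts X := by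
        have hh := (hlat.1 _ hpV _ h0V).2
        rwa [show μ k = (x,y) from rfl, inf_mk' _ _ _ _ x p2 (by omega) (by omega)] at hh
      have hbV : ((x+1, q2) : ℤ×ℤ) ∈ Verts X := by
        have hh := (hlat.1 _ hpV _ hqJI.1).2
        rwa [inf_mk' _ _ _ _ (x+1) q2 (by omega) (by omega)] at hh
      exact hirr _ haV _ hbV (mk_lt_mk' (by omega) (by omega) (by omega))
        (mk_lt_mk' (by omega) (by omega) (by omega))
        (sup_mk' _ _ _ _ _ _ (by omega) (by omega))
  · -- both vertical
    obtain ⟨e1, e2⟩ := step_comp h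
    obtain ⟨f1, f2⟩ := step_comp (hdir ▸ h)
    obtain ⟨hpV, -, hirr⟩ := id hpJI
    obtain ⟨p1, p2⟩ := p
    obtain ⟨q1, q2⟩ := q
    have hple' : p1 ≤ x ∧ p2 ≤ y + 1 := by
      have := Prod.le_def.1 hple; constructor <;> omega
    have hpnle' : ¬ (p1 ≤ x ∧ p2 ≤ y) := by
      intro hc; exact hpnle (Prod.le_def.2 ⟨by omega, by omega⟩)
    have hq1 : q2 = y + 2 ∧ q1 ≤ x := by
      have h1 := Prod.le_def.1 hqle
      have h2 : ¬ (q1 ≤ x ∧ q2 ≤ y + 1) := fun hc => hqnle (Prod.le_def.2 ⟨by omega, by omega⟩)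
      constructor <;> omega
    have hp2 : p2 = y + 1 := by omega
    rcases le_or_gt p1 q1 with hpq | hpq
    · have : ((p1,p2) : ℤ×ℤ) ≤ (q1,q2) := Prod.mk_le_mk.2 ⟨hpq, by omega⟩
      have := hω.2 _ hpJI _ hqJI this
      omega
    · have haV : ((p1, y) : ℤ×ℤ) ∈ Verts X := by
        have hh := (hlat.1 _ hpV _ h0V).2
        rwa [show μ k = (x,y) from rfl, inf_mk' _ _ _ _ p1 y (by omega) (by omega)] at hh
      have hbV : ((q1, y+1) : ℤ×ℤ) ∈ Verts X := by
        have hh := (hlat.1 _ hpV _ hqJI.1).2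
        rwa [inf_mk' _ _ _ _ q1 (y+1) (by omega) (by omega)] at hh
      exact hirr _ haV _ hbV (mk_lt_mk' (by omega) (by omega) (by omega))
        (mk_lt_mk' (by omega) (by omega) (by omega))
        (sup_mk' _ _ _ _ _ _ (by omega) (by omega))

lemma label_exists (hlat : LatticeSetup X m n) (hμ : IsMaxChainPath X m n μ)
    {k : ℕ} (hk : k < m + n) :
    ∃ p, p ∈ JoinIrr X ∧ p ≤ μ (k+1) ∧ ¬ p ≤ μ k := by
  have h0V := hμ.2.2.2 k (by omega)
  have h1V := hμ.2.2.2 (k+1) (by omega)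
  have h0 : μ k = ((μ k).1, (μ k).2) := rfl
  rcases hμ.2.1 k hk with h | h
  · obtain ⟨e1, e2⟩ := step_comp h
    have h1 : μ (k+1) = ((μ k).1 + 1, (μ k).2) := pt_eq e1 (by omega)
    rw [h1] at h1V ⊢
    obtain ⟨t, htV, -, htmin⟩ := colMin_s6 hlat h1V
    obtain ⟨hJI, hle, hnle⟩ := labelH_JI hlat (h0 ▸ h0V) h1V htV htmin
    exact ⟨_, hJI, hle, h0 ▸ hnle⟩
  · obtain ⟨e1, e2⟩ := step_comp h
    have h1 : μ (k+1) = ((μ k).1, (μ k).2 + 1) := pt_eq (by omega) e2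
    rw [h1] at h1V ⊢
    obtain ⟨s, hsV, -, hsmin⟩ := rowMin_s6 hlat h1V
    obtain ⟨hJI, hle, hnle⟩ := labelV_JI hlat (h0 ▸ h0V) h1V hsV hsmin
    exact ⟨_, hJI, hle, h0 ▸ hnle⟩

lemma no_double (hlat : LatticeSetup X m n) (hω : OmegaOK X ω) {x y : ℤ}
    (h00 : (x,y) ∈ Verts X) (h10 : (x+1,y) ∈ Verts X) (h01 : (x,y+1) ∈ Verts X)
    (h11 : (x+1,y+1) ∈ Verts X)
    {p q p' q' : ℤ×ℤ} (hp : p ∈ JoinIrr X) (hq : q ∈ JoinIrr X)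
    (hp' : p' ∈ JoinIrr X) (hq' : q' ∈ JoinIrr X)
    (hp1 : p ≤ (x+1,y)) (hp2 : ¬ p ≤ (x,y))
    (hq1 : q ≤ (x+1,y+1)) (hq2 : ¬ q ≤ (x+1,y))
    (hp'1 : p' ≤ (x,y+1)) (hp'2 : ¬ p' ≤ (x,y))
    (hq'1 : q' ≤ (x+1,y+1)) (hq'2 : ¬ q' ≤ (x,y+1))
    (hd1 : ω q < ω p) (hd2 : ω q' < ω p') : False := by
  obtain ⟨t, htV, -, htmin⟩ := colMin_s6 hlat h10
  obtain ⟨s, hsV, -, hsmin⟩ := rowMin_s6 hlat h01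
  have e1 : p = (x+1, t) := labelH_eq hlat h00 htV htmin hp hp1 hp2
  have e2 : q' = (x+1, t) := labelH_eq hlat h01 htV htmin hq' hq'1 hq'2
  have e3 : p' = (s, y+1) := labelV_eq hlat h00 hsV hsmin hp' hp'1 hp'2
  have e4 : q = (s, y+1) := labelV_eq hlat h10 hsV hsmin hq hq1 hq2
  rw [e1, e4] at hd1
  rw [e2, e3] at hd2
  omega

lemma main_aux (hlat : LatticeSetup X m n) (hω : OmegaOK X ω)
    (hμ : IsMaxChainPath X m n μ) (hν : IsMaxChainPath X m n ν)
    (hpsi : psi X m n ω μ = psi X m n ω ν)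
    {j : ℕ} (hj2 : j + 1 ≤ m + n) (heq : μ j = ν j)
    (hsμ : μ (j+1) - μ j = ((1,0) : ℤ×ℤ)) (hsν : ν (j+1) - ν j = ((0,1) : ℤ×ℤ)) :
    False := by
  classical
  obtain ⟨x, y, hμj⟩ : ∃ x y, μ j = (x, y) := ⟨_, _, rfl⟩
  have hνj : ν j = (x, y) := heq ▸ hμj
  have hμj1 : μ (j+1) = (x+1, y) := by
    obtain ⟨e1, e2⟩ := step_comp hsμ
    rw [hμj] at e1 e2; exact pt_eq (by omega) (by omega)
  have hνj1 : ν (j+1) = (x, y+1) := by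
    obtain ⟨e1, e2⟩ := step_comp hsν
    rw [hνj] at e1 e2; exact pt_eq (by omega) (by omega)
  have hμjV : ((x,y) : ℤ×ℤ) ∈ Verts X := hμj ▸ hμ.2.2.2 j (by omega)
  have hμj1V : ((x+1,y) : ℤ×ℤ) ∈ Verts X := hμj1 ▸ hμ.2.2.2 (j+1) (by omega)
  have hνj1V : ((x,y+1) : ℤ×ℤ) ∈ Verts X := hνj1 ▸ hν.2.2.2 (j+1) (by omega)
  have hyn : y + 1 ≤ n := by
    have h := (hlat.2.2.2 _ hνj1V).2
    exact (Prod.le_def.1 h).2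
  have hxm : x + 1 ≤ m := by
    have h := (hlat.2.2.2 _ hμj1V).2
    exact (Prod.le_def.1 h).1
  -- the common final configuration (double descent at the divergence cell)
  have hfinal : j + 2 ≤ m + n → μ (j+2) = ((x+1, y+1) : ℤ×ℤ) →
      ν (j+2) = ((x+1, y+1) : ℤ×ℤ) →
      DescentAt X ω μ (j+1) → DescentAt X ω ν (j+1) → False := by
    intro hj22 hμ2 hν2 hdμ hdν
    have h11V : ((x+1,y+1) : ℤ×ℤ) ∈ Verts X := hμ2 ▸ hμ.2.2.2 (j+2) hj22
    obtain ⟨p, hp, q, hq, hple, hpnle, hqle, hqnle, hlt1⟩ := hdμ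
    obtain ⟨p', hp', q', hq', hple', hpnle', hqle', hqnle', hlt2⟩ := hdν
    simp only [Nat.add_sub_cancel] at hpnle hpnle'
    rw [show j+1+1 = j+2 from rfl] at hqle hqle'
    rw [hμj] at hpnle; rw [hμj1] at hple hqnle; rw [hμ2] at hqle
    rw [hνj] at hpnle'; rw [hνj1] at hple' hqnle'; rw [hν2] at hqle'
    exact no_double hlat hω hμjV hμj1V hνj1V h11V hp hq hp' hq'
      hple hpnle hqle hqnle hple' hpnle' hqle' hqnle' hlt1 hlt2
  -- K : first vertical step of μ at or after j
  have hexK : ∃ k, j ≤ k ∧ k + 2 ≤ m + n ∧ μ (k+2) - μ (k+1) = ((0,1) : ℤ×ℤ) := by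
    by_contra hc
    push_neg at hc
    have hconst : ∀ k, j ≤ k → k + 1 ≤ m + n → (μ (k+1)).2 = y := by
      intro k hk
      induction k, hk using Nat.le_induction with
      | base => intro _; rw [hμj1]
      | succ k hk ih =>
        intro hk2
        rcases hμ.2.1 (k+1) (by omega) with h | h
        · have h2 := (step_comp h).2
          have h3 := ih (by omega)
          omega
        · rw [show k+1+1 = k+2 from rfl] at h
          exact absurd h (hc k hk (by omega))
    obtain ⟨M, hM⟩ : ∃ M, m + n = M + 1 := ⟨m + n - 1, by omega⟩
    have h1 := hconst M (by omega) (by omega)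
    have h2 : μ (M+1) = (((m:ℤ), (n:ℤ)) : ℤ×ℤ) := by rw [← hM]; exact hμ.2.2.1 _ le_rfl
    rw [h2] at h1
    simp at h1
    omega
  obtain ⟨K, ⟨hKj, hK2, hKdir⟩, hKminraw⟩ :
      ∃ K, (j ≤ K ∧ K + 2 ≤ m + n ∧ μ (K+2) - μ (K+1) = ((0,1) : ℤ×ℤ)) ∧
        ∀ k < K, ¬ (j ≤ k ∧ k + 2 ≤ m + n ∧ μ (k+2) - μ (k+1) = ((0,1) : ℤ×ℤ)) :=
    ⟨Nat.find hexK, Nat.find_spec hexK, fun k hk => Nat.find_min hexK hk⟩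
  have hKmin : ∀ k, j ≤ k → k < K → μ (k+2) - μ (k+1) = ((1,0) : ℤ×ℤ) := by
    intro k hk1 hk2'
    rcases hμ.2.1 (k+1) (by omega) with h | h
    · rw [show k+1+1 = k+2 from rfl] at h; exact h
    · rw [show k+1+1 = k+2 from rfl] at h
      exact absurd ⟨hk1, by omega, h⟩ (hKminraw k hk2')
  have hHoriz : ∀ k, j ≤ k → k ≤ K → μ (k+1) - μ k = ((1,0) : ℤ×ℤ) := by
    intro k hk1 hk2'
    rcases Nat.eq_or_lt_of_le hk1 with h | h
    · rw [← h]; exact hsμ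
    · obtain ⟨k', rfl⟩ : ∃ k', k = k' + 1 := ⟨k - 1, by omega⟩
      exact hKmin k' (by omega) (by omega)
  have hposμ : ∀ k, j ≤ k → k ≤ K + 1 → (μ k).2 = y := by
    intro k hk1
    induction k, hk1 using Nat.le_induction with
    | base => intro _; rw [hμj]
    | succ k hk ih =>
      intro hk2
      have h2 := (step_comp (hHoriz k hk (by omega))).2
      have h3 := ih (by omega)
      omega
  have hμK1y : (μ (K+1)).2 = y := hposμ (K+1) (by omega) le_rfl
  have hμK2 : μ (K+2) = (((μ (K+1)).1, y+1) : ℤ×ℤ) := by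
    obtain ⟨e1, e2⟩ := step_comp hKdir
    exact pt_eq (by omega) (by omega)
  -- L : first horizontal step of ν at or after j
  have hexL : ∃ k, j ≤ k ∧ k + 2 ≤ m + n ∧ ν (k+2) - ν (k+1) = ((1,0) : ℤ×ℤ) := by
    by_contra hc
    push_neg at hc
    have hconst : ∀ k, j ≤ k → k + 1 ≤ m + n → (ν (k+1)).1 = x := by
      intro k hk
      induction k, hk using Nat.le_induction with
      | base => intro _; rw [hνj1]
      | succ k hk ih =>
        intro hk2
        rcases hν.2.1 (k+1) (by omega) with h | h
        · rw [show k+1+1 = k+2 from rfl] at h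
          exact absurd h (hc k hk (by omega))
        · have h2 := (step_comp h).1
          have h3 := ih (by omega)
          omega
    obtain ⟨M, hM⟩ : ∃ M, m + n = M + 1 := ⟨m + n - 1, by omega⟩
    have h1 := hconst M (by omega) (by omega)
    have h2 : ν (M+1) = (((m:ℤ), (n:ℤ)) : ℤ×ℤ) := by rw [← hM]; exact hν.2.2.1 _ le_rfl
    rw [h2] at h1
    simp at h1
    omega
  obtain ⟨L, ⟨hLj, hL2, hLdir⟩, hLminraw⟩ :
      ∃ L, (j ≤ L ∧ L + 2 ≤ m + n ∧ ν (L+2) - ν (L+1) = ((1,0) : ℤ×ℤ)) ∧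
        ∀ k < L, ¬ (j ≤ k ∧ k + 2 ≤ m + n ∧ ν (k+2) - ν (k+1) = ((1,0) : ℤ×ℤ)) :=
    ⟨Nat.find hexL, Nat.find_spec hexL, fun k hk => Nat.find_min hexL hk⟩
  have hLmin : ∀ k, j ≤ k → k < L → ν (k+2) - ν (k+1) = ((0,1) : ℤ×ℤ) := by
    intro k hk1 hk2'
    rcases hν.2.1 (k+1) (by omega) with h | h
    · rw [show k+1+1 = k+2 from rfl] at h
      exact absurd ⟨hk1, by omega, h⟩ (hLminraw k hk2')
    · rw [show k+1+1 = k+2 from rfl] at h; exact h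
  have hVert : ∀ k, j ≤ k → k ≤ L → ν (k+1) - ν k = ((0,1) : ℤ×ℤ) := by
    intro k hk1 hk2'
    rcases Nat.eq_or_lt_of_le hk1 with h | h
    · rw [← h]; exact hsν
    · obtain ⟨k', rfl⟩ : ∃ k', k = k' + 1 := ⟨k - 1, by omega⟩
      exact hLmin k' (by omega) (by omega)
  have hposν : ∀ k, j ≤ k → k ≤ L + 1 → (ν k).1 = x := by
    intro k hk1
    induction k, hk1 using Nat.le_induction with
    | base => intro _; rw [hνj]
    | succ k hk ih =>
      intro hk2
      have h2 := (step_comp (hVert k hk (by omega))).1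
      have h3 := ih (by omega)
      omega
  have hνL1x : (ν (L+1)).1 = x := hposν (L+1) (by omega) le_rfl
  have hνL2 : ν (L+2) = ((x+1, (ν (L+1)).2) : ℤ×ℤ) := by
    obtain ⟨e1, e2⟩ := step_comp hLdir
    exact pt_eq (by omega) (by omega)
  by_cases hdμK : DescentAt X ω μ (K+1)
  · -- Case 1 : μ has a descent at its first corner after the divergence
    have hmem : μ (K+2) ∈ psi X m n ω ν := by
      rw [← hpsi]
      exact ⟨K+1, ⟨by omega, by omega, hdμK⟩, rfl⟩
    obtain ⟨i, ⟨hi1, hi2, hdνi⟩, hieq⟩ := hmem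
    have hieq' : ν (i+1) = μ (K+2) := hieq
    have hiK : i = K + 1 := by
      have c1 := chain_coordsum hν (i+1) (by omega)
      have c2 := chain_coordsum hμ (K+2) (by omega)
      rw [hieq'] at c1
      omega
    subst hiK
    rw [show K+1+1 = K+2 from rfl] at hieq'
    have hd2 := hν.2.1 (K+1) (by omega)
    rw [show K+1+1 = K+2 from rfl] at hd2
    have hd1 := hν.2.1 K (by omega)
    have hperp : (ν K).1 = (μ (K+1)).1 - 1 ∧ (ν K).2 = y := by
      have e1 : (ν (K+2)).1 = (μ (K+1)).1 := by rw [hieq', hμK2]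
      have e2 : (ν (K+2)).2 = y + 1 := by rw [hieq', hμK2]
      rcases hd1 with h1 | h1 <;> rcases hd2 with h2 | h2
      · exact absurd hdνi (straight_no_descent hlat hω hν (by omega) (by rw [h1, h2]))
      · obtain ⟨a1,a2⟩ := step_comp h1; obtain ⟨b1,b2⟩ := step_comp h2
        constructor <;> omega
      · obtain ⟨a1,a2⟩ := step_comp h1; obtain ⟨b1,b2⟩ := step_comp h2
        constructor <;> omega
      · exact absurd hdνi (straight_no_descent hlat hω hν (by omega) (by rw [h1, h2]))
    rcases Nat.eq_or_lt_of_le hKj with hKj' | hKj'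
    · -- K = j : double descent at the divergence cell
      subst hKj'
      have hc1 : (μ (j+1)).1 = x + 1 := by
        have h1 := hperp.1
        have hν2 : (ν j).1 = x := by rw [hνj]
        omega
      have hμ2 : μ (j+2) = ((x+1, y+1) : ℤ×ℤ) := by
        rw [hμK2, hc1]
      exact hfinal (by omega) hμ2 (by rw [hieq', hμ2]) hdμK hdνi
    · -- j < K : impossible position for ν's corner
      have hm := chain_mono hν (j+1) K (by omega) (by omega)
      rw [hνj1] at hm
      have h2 := (Prod.le_def.1 hm).2
      have h3 := hperp.2
      omega
  · by_cases hdνL : DescentAt X ω ν (L+1)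
    · -- Case 2 : ν has a descent at its first corner after the divergence
      have hmem : ν (L+2) ∈ psi X m n ω μ := by
        rw [hpsi]
        exact ⟨L+1, ⟨by omega, by omega, hdνL⟩, rfl⟩
      obtain ⟨i, ⟨hi1, hi2, hdμi⟩, hieq⟩ := hmem
      have hieq' : μ (i+1) = ν (L+2) := hieq
      have hiL : i = L + 1 := by
        have c1 := chain_coordsum hμ (i+1) (by omega)
        have c2 := chain_coordsum hν (L+2) (by omega)
        rw [hieq'] at c1
        omega
      subst hiL
      rw [show L+1+1 = L+2 from rfl] at hieq'
      have hd2 := hμ.2.1 (L+1) (by omega)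
      rw [show L+1+1 = L+2 from rfl] at hd2
      have hd1 := hμ.2.1 L (by omega)
      have hperp : (μ L).1 = x ∧ (μ L).2 = (ν (L+1)).2 - 1 := by
        have e1 : (μ (L+2)).1 = x + 1 := by rw [hieq', hνL2]
        have e2 : (μ (L+2)).2 = (ν (L+1)).2 := by rw [hieq', hνL2]
        rcases hd1 with h1 | h1 <;> rcases hd2 with h2 | h2
        · exact absurd hdμi (straight_no_descent hlat hω hμ (by omega) (by rw [h1, h2]))
        · obtain ⟨a1,a2⟩ := step_comp h1; obtain ⟨b1,b2⟩ := step_comp h2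
          constructor <;> omega
        · obtain ⟨a1,a2⟩ := step_comp h1; obtain ⟨b1,b2⟩ := step_comp h2
          constructor <;> omega
        · exact absurd hdμi (straight_no_descent hlat hω hμ (by omega) (by rw [h1, h2]))
      rcases Nat.eq_or_lt_of_le hLj with hLj' | hLj'
      · -- L = j
        subst hLj'
        have hr : (ν (j+1)).2 = y + 1 := by rw [hνj1]
        have hν2 : ν (j+2) = ((x+1, y+1) : ℤ×ℤ) := by
          rw [hνL2]; exact pt_eq rfl (by omega)
        exact hfinal (by omega) (by rw [hieq', hν2]) hν2 hdμi hdνL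
      · -- j < L : impossible position for μ's corner
        have hm := chain_mono hμ (j+1) L (by omega) (by omega)
        rw [hμj1] at hm
        have h2 := (Prod.le_def.1 hm).1
        have h3 := hperp.1
        omega
    · -- Case 3 : no descent at either first corner; increasing labels both ways
      obtain ⟨t, htV, hty, htmin⟩ := colMin_s6 hlat hμj1V
      obtain ⟨s, hsV, hsx, hsmin⟩ := rowMin_s6 hlat hνj1V
      have htJI := labelH_JI hlat hμjV hμj1V htV htmin
      have hsJI := labelV_JI hlat hμjV hνj1V hsV hsmin
      -- run along μ
      have runμ : ∀ k, j ≤ k → k ≤ K → ∀ p, p ∈ JoinIrr X → p ≤ μ (k+1) → ¬ p ≤ μ k →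
          ω ((x+1, t) : ℤ×ℤ) ≤ ω p := by
        intro k hk
        induction k, hk using Nat.le_induction with
        | base =>
          intro _ p hp hple hpnle
          have : p = ((x+1, t) : ℤ×ℤ) :=
            labelH_eq hlat hμjV htV htmin hp (by rwa [hμj1] at hple) (by rwa [hμj] at hpnle)
          rw [this]
        | succ k hk ih =>
          intro hk2 p hp hple hpnle
          have hnd : ¬ DescentAt X ω μ (k+1) :=
            straight_no_descent hlat hω hμ (by omega)
              (by rw [hHoriz k hk (by omega), hKmin k hk (by omega)])
          obtain ⟨p0, hp0, hp0le, hp0nle⟩ := label_exists hlat hμ (k := k) (by omega)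
          have h1 := ih (by omega) p0 hp0 hp0le hp0nle
          have h2 : ω p0 ≤ ω p := by
            by_contra hcon
            exact hnd ⟨p0, hp0, p, hp, hp0le, by simpa using hp0nle,
              by rw [show k+1+1 = k+2 from rfl]; exact hple, hpnle, by omega⟩
          omega
      -- run along ν
      have runν : ∀ k, j ≤ k → k ≤ L → ∀ p, p ∈ JoinIrr X → p ≤ ν (k+1) → ¬ p ≤ ν k →
          ω ((s, y+1) : ℤ×ℤ) ≤ ω p := by
        intro k hk
        induction k, hk using Nat.le_induction with
        | base =>
          intro _ p hp hple hpnle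
          have : p = ((s, y+1) : ℤ×ℤ) :=
            labelV_eq hlat hμjV hsV hsmin hp (by rwa [hνj1] at hple) (by rwa [hνj] at hpnle)
          rw [this]
        | succ k hk ih =>
          intro hk2 p hp hple hpnle
          have hnd : ¬ DescentAt X ω ν (k+1) :=
            straight_no_descent hlat hω hν (by omega)
              (by rw [hVert k hk (by omega), hLmin k hk (by omega)])
          obtain ⟨p0, hp0, hp0le, hp0nle⟩ := label_exists hlat hν (k := k) (by omega)
          have h1 := ih (by omega) p0 hp0 hp0le hp0nle
          have h2 : ω p0 ≤ ω p := by
            by_contra hcon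
            exact hnd ⟨p0, hp0, p, hp, hp0le, by simpa using hp0nle,
              by rw [show k+1+1 = k+2 from rfl]; exact hple, hpnle, by omega⟩
          omega
      -- corner of μ
      have hμK1 : μ (K+1) = (((μ (K+1)).1, y) : ℤ×ℤ) := pt_eq rfl hμK1y
      have hVc0 : (((μ (K+1)).1, y) : ℤ×ℤ) ∈ Verts X := hμK1 ▸ hμ.2.2.2 (K+1) (by omega)
      have hVc1 : (((μ (K+1)).1, y+1) : ℤ×ℤ) ∈ Verts X := hμK2 ▸ hμ.2.2.2 (K+2) (by omega)
      obtain ⟨hqJI, hqle, hqnle⟩ := labelV_JI hlat hVc0 hVc1 hsV hsmin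
      obtain ⟨pK, hpK, hpKle, hpKnle⟩ := label_exists hlat hμ (k := K) (by omega)
      have hrunμ := runμ K hKj le_rfl pK hpK hpKle hpKnle
      have hμcorner : ω pK ≤ ω ((s, y+1) : ℤ×ℤ) := by
        by_contra hcon
        exact hdμK ⟨pK, hpK, (s, y+1), hqJI, hpKle, by simpa using hpKnle,
          by rw [show K+1+1 = K+2 from rfl, hμK2]; exact hqle,
          by rw [hμK1]; exact hqnle, by omega⟩
      -- corner of ν
      have hνL1 : ν (L+1) = ((x, (ν (L+1)).2) : ℤ×ℤ) := pt_eq hνL1x rfl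
      have hWc0 : ((x, (ν (L+1)).2) : ℤ×ℤ) ∈ Verts X := hνL1 ▸ hν.2.2.2 (L+1) (by omega)
      have hWc1 : ((x+1, (ν (L+1)).2) : ℤ×ℤ) ∈ Verts X := hνL2 ▸ hν.2.2.2 (L+2) (by omega)
      obtain ⟨hq'JI, hq'le, hq'nle⟩ := labelH_JI hlat hWc0 hWc1 htV htmin
      obtain ⟨pL, hpL, hpLle, hpLnle⟩ := label_exists hlat hν (k := L) (by omega)
      have hrunν := runν L hLj le_rfl pL hpL hpLle hpLnle
      have hνcorner : ω pL ≤ ω ((x+1, t) : ℤ×ℤ) := by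
        by_contra hcon
        exact hdνL ⟨pL, hpL, (x+1, t), hq'JI, hpLle, by simpa using hpLnle,
          by rw [show L+1+1 = L+2 from rfl, hνL2]; exact hq'le,
          by rw [hνL1]; exact hq'nle, by omega⟩
      have heqω : ω ((x+1, t) : ℤ×ℤ) = ω ((s, y+1) : ℤ×ℤ) := by omega
      have := hω.1 htJI.1 hsJI.1 heqω
      rw [Prod.mk.injEq] at this
      omega

end Chain
end PsiAux

theorem psi_injective (X : Finset (ℤ × ℤ)) (m n : ℕ)
    (hpoly : IsPolyomino X) (hconv : IsConvexPoly X)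
    (hlat : LatticeSetup X m n)
    (ω : ℤ × ℤ → ℕ) (hω : OmegaOK X ω)
    (μ ν : ℕ → ℤ × ℤ) (hμ : IsMaxChainPath X m n μ) (hν : IsMaxChainPath X m n ν)
    (hpsi : psi X m n ω μ = psi X m n ω ν) :
    μ = ν := by
  classical
  by_contra hne
  have hex : ∃ i, μ i ≠ ν i := by
    by_contra hc; push_neg at hc; exact hne (funext hc)
  obtain ⟨J, hJspec, hJmin⟩ : ∃ J, μ J ≠ ν J ∧ ∀ k < J, ¬ μ k ≠ ν k :=
    ⟨Nat.find hex, Nat.find_spec hex, fun k hk => Nat.find_min hex hk⟩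
  have hJ0 : J ≠ 0 := by rintro rfl; exact hJspec (hμ.1.trans hν.1.symm)
  have hJle : J ≤ m + n := by
    by_contra h
    exact hJspec ((hμ.2.2.1 J (by omega)).trans (hν.2.2.1 J (by omega)).symm)
  obtain ⟨j, rfl⟩ : ∃ j, J = j + 1 := ⟨J - 1, by omega⟩
  have heqj : μ j = ν j := not_ne_iff.1 (hJmin j (by omega))
  have he1 : (μ j).1 = (ν j).1 := congrArg Prod.fst heqj
  have he2 : (μ j).2 = (ν j).2 := congrArg Prod.snd heqj
  have hd1 := hμ.2.1 j (by omega)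
  have hd2 := hν.2.1 j (by omega)
  rcases hd1 with h1 | h1 <;> rcases hd2 with h2 | h2
  · obtain ⟨a1,a2⟩ := step_comp h1; obtain ⟨b1,b2⟩ := step_comp h2
    exact hJspec (Prod.ext_iff.2 ⟨by omega, by omega⟩)
  · exact main_aux hlat hω hμ hν hpsi (by omega) heqj h1 h2
  · exact main_aux hlat hω hν hμ hpsi.symm (by omega) heqj.symm h2 h1
  · obtain ⟨a1,a2⟩ := step_comp h1; obtain ⟨b1,b2⟩ := step_comp h2
    exact hJspec (Prod.ext_iff.2 ⟨by omega, by omega⟩)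
end

section
/- Let X be a convex polyomino such that V(X) ⊆ ℕ² is a sublattice of ℕ² with minimum (0,0) and maximum (m,n), and fix an injective order-preserving map ω from JI(X) to ℕ. If μ is a maximal chain of V(X) with exactly k descents, then ψ(μ) is a k-rook configuration in X: ψ(μ) consists of k cells of X, no two of which lie in the same row or the same column. -/
/-- Crossing lemma: a connected path from x-coordinate `< a` to `≥ a` crosses column `a`. -/
lemma crossX (X : Finset (ℤ × ℤ)) (a : ℤ) {c d : ℤ × ℤ}
    (h : Relation.ReflTransGen (fun u v => u ∈ X ∧ v ∈ X ∧ Adj u v) c d)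
    (hc : c.1 < a) (hd : a ≤ d.1) :
    ∃ y : ℤ, ((a - 1, y) : ℤ × ℤ) ∈ X ∧ ((a, y) : ℤ × ℤ) ∈ X := by
  induction h with
  | refl => exact absurd hd (not_le.mpr hc)
  | @tail b e hcb hbe ih =>
    by_cases hb : b.1 < a
    · obtain ⟨hbX, heX, hadj⟩ := hbe
      rcases hadj with ⟨h1, _⟩ | ⟨h1, h2 | h2⟩
      · exact absurd hd (by omega)
      · exact absurd hd (by omega)
      · have hb1 : b.1 = a - 1 := by omega
        have he1 : e.1 = a := by omega
        refine ⟨e.2, ?_, ?_⟩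
        · have : ((a - 1, e.2) : ℤ × ℤ) = b := by
            ext <;> simp [hb1, h1]
          rwa [this]
        · have : ((a, e.2) : ℤ × ℤ) = e := by ext <;> simp [he1]
          rwa [this]
    · exact ih (le_of_not_gt hb)

/-- Crossing lemma: a connected path from y-coordinate `< b` to `≥ b` crosses row `b`. -/
lemma crossY (X : Finset (ℤ × ℤ)) (b : ℤ) {c d : ℤ × ℤ}
    (h : Relation.ReflTransGen (fun u v => u ∈ X ∧ v ∈ X ∧ Adj u v) c d)
    (hc : c.2 < b) (hd : b ≤ d.2) :
    ∃ x : ℤ, ((x, b - 1) : ℤ × ℤ) ∈ X ∧ ((x, b) : ℤ × ℤ) ∈ X := by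
  induction h with
  | refl => exact absurd hd (not_le.mpr hc)
  | @tail e f hce hef ih =>
    by_cases hb : e.2 < b
    · obtain ⟨heX, hfX, hadj⟩ := hef
      rcases hadj with ⟨h1, h2 | h2⟩ | ⟨h1, _⟩
      · exact absurd hd (by omega)
      · have he2 : e.2 = b - 1 := by omega
        have hf2 : f.2 = b := by omega
        refine ⟨f.1, ?_, ?_⟩
        · have : ((f.1, b - 1) : ℤ × ℤ) = e := by ext <;> simp [he2, h1]
          rwa [this]
        · have : ((f.1, b) : ℤ × ℤ) = f := by ext <;> simp [hf2]
          rwa [this]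
      · exact absurd hd (by omega)
    · exact ih (le_of_not_gt hb)

lemma verts_cases {X : Finset (ℤ × ℤ)} {u v : ℤ} (h : ((u, v) : ℤ × ℤ) ∈ Verts X) :
    ((u, v) : ℤ × ℤ) ∈ X ∨ ((u + 1, v) : ℤ × ℤ) ∈ X ∨
    ((u, v + 1) : ℤ × ℤ) ∈ X ∨ ((u + 1, v + 1) : ℤ × ℤ) ∈ X := by
  obtain ⟨c, hc, hcase⟩ := h
  have hx := c.1
  rcases hcase with h | h | h | h
  · left; rwa [← h] at hc
  · right; left
    have : ((u + 1, v) : ℤ × ℤ) = c := by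
      have h' : u = c.1 - 1 ∧ v = c.2 := by
        simpa [Prod.ext_iff, Prod.sub_def] using h
      simp [Prod.ext_iff]; omega
    rwa [this]
  · right; right; left
    have : ((u, v + 1) : ℤ × ℤ) = c := by
      have h' : u = c.1 ∧ v = c.2 - 1 := by
        simpa [Prod.ext_iff, Prod.sub_def] using h
      simp [Prod.ext_iff]; omega
    rwa [this]
  · right; right; right
    have : ((u + 1, v + 1) : ℤ × ℤ) = c := by
      have h' : u = c.1 - 1 ∧ v = c.2 - 1 := by
        simpa [Prod.ext_iff, Prod.sub_def] using h
      simp [Prod.ext_iff]; omega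
    rwa [this]

/-- If all four corners of a cell are vertices of a convex polyomino `X`,
then the cell belongs to `X`. -/
lemma cell_mem (X : Finset (ℤ × ℤ)) (hpoly : IsPolyomino X) (hconv : IsConvexPoly X)
    (a b : ℤ) (h1 : ((a, b) : ℤ × ℤ) ∈ Verts X) (h2 : ((a - 1, b) : ℤ × ℤ) ∈ Verts X)
    (h3 : ((a, b - 1) : ℤ × ℤ) ∈ Verts X) (h4 : ((a - 1, b - 1) : ℤ × ℤ) ∈ Verts X) :
    ((a, b) : ℤ × ℤ) ∈ X := by
  by_contra hout
  have path : ∀ c d : ℤ × ℤ, c ∈ X → d ∈ X →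
      Relation.ReflTransGen (fun u v => u ∈ X ∧ v ∈ X ∧ Adj u v) c d :=
    fun c d hc hd => hpoly.2 c hc d hd
  have rowb : ∀ x1 x2 : ℤ, ((x1, b) : ℤ × ℤ) ∈ X → ((x2, b) : ℤ × ℤ) ∈ X →
      x1 ≤ a → a ≤ x2 → False :=
    fun x1 x2 hx1 hx2 l1 l2 => hout (hconv.1 x1 x2 a b hx1 hx2 l1 l2)
  have cola : ∀ y1 y2 : ℤ, ((a, y1) : ℤ × ℤ) ∈ X → ((a, y2) : ℤ × ℤ) ∈ X →
      y1 ≤ b → b ≤ y2 → False :=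
    fun y1 y2 hy1 hy2 l1 l2 => hout (hconv.2 y1 y2 b a hy1 hy2 l1 l2)
  have TR := verts_cases h1
  have TL := verts_cases h2
  have BR := verts_cases h3
  have BL := verts_cases h4
  simp only [sub_add_cancel] at TL BR BL
  -- crossing rules
  have R7 : ((a + 1, b) : ℤ × ℤ) ∈ X → ((a - 1, b + 1) : ℤ × ℤ) ∈ X →
      ((a, b - 1) : ℤ × ℤ) ∈ X → False := by
    intro hP1 hP7 hP5
    obtain ⟨y, hy1, hy2⟩ := crossX X a (path _ _ hP7 hP1)
      (show a - 1 < a by omega) (show a ≤ a + 1 by omega)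
    rcases lt_trichotomy y b with hlt | rfl | hgt
    · exact rowb (a - 1) (a + 1)
        (hconv.2 y (b + 1) b (a - 1) hy1 hP7 (by omega) (by omega)) hP1 (by omega) (by omega)
    · exact hout hy2
    · exact cola (b - 1) y hP5 hy2 (by omega) (by omega)
  have R10 : ((a + 1, b) : ℤ × ℤ) ∈ X → ((a, b + 1) : ℤ × ℤ) ∈ X →
      ((a - 1, b - 1) : ℤ × ℤ) ∈ X → False := by
    intro hP1 hP2 hP4
    obtain ⟨y, hy1, hy2⟩ := crossX X a (path _ _ hP4 hP1)
      (show a - 1 < a by omega) (show a ≤ a + 1 by omega)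
    rcases lt_trichotomy y b with hlt | rfl | hgt
    · exact cola y (b + 1) hy2 hP2 (by omega) (by omega)
    · exact hout hy2
    · exact rowb (a - 1) (a + 1)
        (hconv.2 (b - 1) y b (a - 1) hP4 hy1 (by omega) (by omega)) hP1 (by omega) (by omega)
  have R8 : ((a, b + 1) : ℤ × ℤ) ∈ X → ((a - 1, b) : ℤ × ℤ) ∈ X →
      ((a + 1, b - 1) : ℤ × ℤ) ∈ X → False := by
    intro hP2 hP6 hP8
    obtain ⟨x, hx1, hx2⟩ := crossY X b (path _ _ hP8 hP2)
      (show b - 1 < b by omega) (show b ≤ b + 1 by omega)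
    rcases lt_trichotomy x a with hlt | rfl | hgt
    · exact cola (b - 1) (b + 1)
        (hconv.1 x (a + 1) a (b - 1) hx1 hP8 (by omega) (by omega)) hP2 (by omega) (by omega)
    · exact hout hx2
    · exact rowb (a - 1) x hP6 hx2 (by omega) (by omega)
  have R11 : ((a + 1, b + 1) : ℤ × ℤ) ∈ X → ((a, b - 1) : ℤ × ℤ) ∈ X →
      ((a - 1, b) : ℤ × ℤ) ∈ X → False := by
    intro hP3 hP5 hP6
    obtain ⟨y, hy1, hy2⟩ := crossX X (a + 1) (path _ _ hP6 hP3)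
      (show a - 1 < a + 1 by omega) (show a + 1 ≤ a + 1 by omega)
    rw [show (a : ℤ) + 1 - 1 = a by ring] at hy1
    rcases le_or_gt y b with hle | hgt
    · exact rowb (a - 1) (a + 1) hP6
        (hconv.2 y (b + 1) b (a + 1) hy2 hP3 hle (by omega)) (by omega) (by omega)
    · exact cola (b - 1) y hP5 hy1 (by omega) (by omega)
  -- key reductions
  have key1 : ((a + 1, b) : ℤ × ℤ) ∈ X → False := by
    intro hP1
    rcases TL with hP6 | h | hP7 | hP2
    · exact rowb (a - 1) (a + 1) hP6 hP1 (by omega) (by omega)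
    · exact hout h
    · rcases BL with hP4 | hP5 | hP6 | h
      · exact rowb (a - 1) (a + 1)
          (hconv.2 (b - 1) (b + 1) b (a - 1) hP4 hP7 (by omega) (by omega)) hP1
          (by omega) (by omega)
      · exact R7 hP1 hP7 hP5
      · exact rowb (a - 1) (a + 1) hP6 hP1 (by omega) (by omega)
      · exact hout h
    · rcases BL with hP4 | hP5 | hP6 | h
      · exact R10 hP1 hP2 hP4
      · exact cola (b - 1) (b + 1) hP5 hP2 (by omega) (by omega)
      · exact rowb (a - 1) (a + 1) hP6 hP1 (by omega) (by omega)
      · exact hout h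
  have key2 : ((a, b + 1) : ℤ × ℤ) ∈ X → False := by
    intro hP2
    rcases BL with hP4 | hP5 | hP6 | h
    · rcases BR with hP5 | hP8 | h | hP1
      · exact cola (b - 1) (b + 1) hP5 hP2 (by omega) (by omega)
      · exact cola (b - 1) (b + 1)
          (hconv.1 (a - 1) (a + 1) a (b - 1) hP4 hP8 (by omega) (by omega)) hP2
          (by omega) (by omega)
      · exact hout h
      · exact R10 hP1 hP2 hP4
    · exact cola (b - 1) (b + 1) hP5 hP2 (by omega) (by omega)
    · rcases BR with hP5 | hP8 | h | hP1
      · exact cola (b - 1) (b + 1) hP5 hP2 (by omega) (by omega)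
      · exact R8 hP2 hP6 hP8
      · exact hout h
      · exact rowb (a - 1) (a + 1) hP6 hP1 (by omega) (by omega)
    · exact hout h
  rcases TR with h | hP1 | hP2 | hP3
  · exact hout h
  · exact key1 hP1
  · exact key2 hP2
  · rcases TL with hP6 | h | hP7 | hP2
    · rcases BR with hP5 | hP8 | h | hP1
      · exact R11 hP3 hP5 hP6
      · exact key1 (hconv.2 (b - 1) (b + 1) b (a + 1) hP8 hP3 (by omega) (by omega))
      · exact hout h
      · exact key1 hP1
    · exact hout h
    · exact key2 (hconv.1 (a - 1) (a + 1) a (b + 1) hP7 hP3 (by omega) (by omega))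
    · exact key2 hP2

/-- Characterization of a join-irreducible entering at a horizontal cover step. -/
lemma minH (X : Finset (ℤ × ℤ))
    (hsub : ∀ a ∈ Verts X, ∀ b ∈ Verts X, a ⊔ b ∈ Verts X ∧ a ⊓ b ∈ Verts X)
    {p : ℤ × ℤ} {x y : ℤ} (hp : p ∈ JoinIrr X) (hxy : ((x, y) : ℤ × ℤ) ∈ Verts X)
    (h1 : p ≤ ((x + 1, y) : ℤ × ℤ)) (h2 : ¬ p ≤ ((x, y) : ℤ × ℤ)) :
    p.1 = x + 1 ∧ p.2 ≤ y ∧ ∀ t : ℤ, ((x + 1, t) : ℤ × ℤ) ∈ Verts X → p.2 ≤ t := by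
  obtain ⟨hpV, -, hirr⟩ := hp
  obtain ⟨ha1, ha2⟩ := Prod.le_def.mp h1
  simp only at ha1 ha2
  have hp1 : p.1 = x + 1 := by
    by_contra hne
    exact h2 (Prod.le_def.mpr ⟨by omega, ha2⟩)
  refine ⟨hp1, ha2, ?_⟩
  intro t ht
  by_contra hts
  push_neg at hts
  have hbV := (hsub p hpV _ hxy).2
  have hbeq : p ⊓ ((x, y) : ℤ × ℤ) = ((x, p.2) : ℤ × ℤ) := by
    have h' : p ⊓ ((x, y) : ℤ × ℤ) = (p.1 ⊓ x, p.2 ⊓ y) := rfl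
    rw [h', Prod.ext_iff]
    constructor <;> simp <;> omega
  rw [hbeq] at hbV
  refine hirr _ ht _ hbV ?_ ?_ ?_
  · exact Prod.lt_iff.mpr (Or.inr ⟨by simp; omega, by simpa using hts⟩)
  · exact Prod.lt_iff.mpr (Or.inl ⟨by simp; omega, by simp⟩)
  · have h' : ((x + 1, t) : ℤ × ℤ) ⊔ ((x, p.2) : ℤ × ℤ) = ((x + 1) ⊔ x, t ⊔ p.2) := rfl
    rw [h', Prod.ext_iff]
    constructor <;> simp <;> omega

/-- Characterization of a join-irreducible entering at a vertical cover step. -/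
lemma minV (X : Finset (ℤ × ℤ))
    (hsub : ∀ a ∈ Verts X, ∀ b ∈ Verts X, a ⊔ b ∈ Verts X ∧ a ⊓ b ∈ Verts X)
    {p : ℤ × ℤ} {x y : ℤ} (hp : p ∈ JoinIrr X) (hxy : ((x, y) : ℤ × ℤ) ∈ Verts X)
    (h1 : p ≤ ((x, y + 1) : ℤ × ℤ)) (h2 : ¬ p ≤ ((x, y) : ℤ × ℤ)) :
    p.2 = y + 1 ∧ p.1 ≤ x ∧ ∀ t : ℤ, ((t, y + 1) : ℤ × ℤ) ∈ Verts X → p.1 ≤ t := by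
  obtain ⟨hpV, -, hirr⟩ := hp
  obtain ⟨ha1, ha2⟩ := Prod.le_def.mp h1
  simp only at ha1 ha2
  have hp2 : p.2 = y + 1 := by
    by_contra hne
    exact h2 (Prod.le_def.mpr ⟨ha1, by omega⟩)
  refine ⟨hp2, ha1, ?_⟩
  intro t ht
  by_contra hts
  push_neg at hts
  have hbV := (hsub p hpV _ hxy).2
  have hbeq : p ⊓ ((x, y) : ℤ × ℤ) = ((p.1, y) : ℤ × ℤ) := by
    have h' : p ⊓ ((x, y) : ℤ × ℤ) = (p.1 ⊓ x, p.2 ⊓ y) := rfl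
    rw [h', Prod.ext_iff]
    constructor <;> simp <;> omega
  rw [hbeq] at hbV
  refine hirr _ ht _ hbV ?_ ?_ ?_
  · exact Prod.lt_iff.mpr (Or.inl ⟨by simpa using hts, by simp; omega⟩)
  · exact Prod.lt_iff.mpr (Or.inr ⟨by simp, by simp; omega⟩)
  · have h' : ((t, y + 1) : ℤ × ℤ) ⊔ ((p.1, y) : ℤ × ℤ) = (t ⊔ p.1, (y + 1) ⊔ y) := rfl
    rw [h', Prod.ext_iff]
    constructor <;> simp <;> omega

/-- Two consecutive horizontal steps: the entering join-irreducibles are comparable. -/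
lemma stepH_le (X : Finset (ℤ × ℤ))
    (hsub : ∀ a ∈ Verts X, ∀ b ∈ Verts X, a ⊔ b ∈ Verts X ∧ a ⊓ b ∈ Verts X)
    {p q : ℤ × ℤ} {x y : ℤ}
    (hp : p ∈ JoinIrr X) (hq : q ∈ JoinIrr X)
    (h0 : ((x, y) : ℤ × ℤ) ∈ Verts X) (h1 : ((x + 1, y) : ℤ × ℤ) ∈ Verts X)
    (hp1 : p ≤ ((x + 1, y) : ℤ × ℤ)) (hp2 : ¬ p ≤ ((x, y) : ℤ × ℤ))
    (hq1 : q ≤ ((x + 2, y) : ℤ × ℤ)) (hq2 : ¬ q ≤ ((x + 1, y) : ℤ × ℤ)) :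
    p ≤ q := by
  obtain ⟨hpa, hpb, hpmin⟩ := minH X hsub hp h0 hp1 hp2
  have hq1' : q ≤ ((x + 1 + 1, y) : ℤ × ℤ) := by rwa [show (x : ℤ) + 1 + 1 = x + 2 by ring]
  obtain ⟨hqa, hqb, -⟩ := minH X hsub hq h1 hq1' hq2
  have hmV := (hsub q hq.1 _ h1).2
  have hmeq : q ⊓ ((x + 1, y) : ℤ × ℤ) = ((x + 1, q.2) : ℤ × ℤ) := by
    have h' : q ⊓ ((x + 1, y) : ℤ × ℤ) = (q.1 ⊓ (x + 1), q.2 ⊓ y) := rfl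
    rw [h', Prod.ext_iff]
    constructor <;> simp <;> omega
  rw [hmeq] at hmV
  have := hpmin q.2 hmV
  exact Prod.le_def.mpr ⟨by omega, by omega⟩

/-- Two consecutive vertical steps: the entering join-irreducibles are comparable. -/
lemma stepV_le (X : Finset (ℤ × ℤ))
    (hsub : ∀ a ∈ Verts X, ∀ b ∈ Verts X, a ⊔ b ∈ Verts X ∧ a ⊓ b ∈ Verts X)
    {p q : ℤ × ℤ} {x y : ℤ}
    (hp : p ∈ JoinIrr X) (hq : q ∈ JoinIrr X)
    (h0 : ((x, y) : ℤ × ℤ) ∈ Verts X) (h1 : ((x, y + 1) : ℤ × ℤ) ∈ Verts X)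
    (hp1 : p ≤ ((x, y + 1) : ℤ × ℤ)) (hp2 : ¬ p ≤ ((x, y) : ℤ × ℤ))
    (hq1 : q ≤ ((x, y + 2) : ℤ × ℤ)) (hq2 : ¬ q ≤ ((x, y + 1) : ℤ × ℤ)) :
    p ≤ q := by
  obtain ⟨hpa, hpb, hpmin⟩ := minV X hsub hp h0 hp1 hp2
  have hq1' : q ≤ ((x, y + 1 + 1) : ℤ × ℤ) := by rwa [show (y : ℤ) + 1 + 1 = y + 2 by ring]
  obtain ⟨hqa, hqb, -⟩ := minV X hsub hq h1 hq1' hq2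
  have hmV := (hsub q hq.1 _ h1).2
  have hmeq : q ⊓ ((x, y + 1) : ℤ × ℤ) = ((q.1, y + 1) : ℤ × ℤ) := by
    have h' : q ⊓ ((x, y + 1) : ℤ × ℤ) = (q.1 ⊓ x, q.2 ⊓ (y + 1)) := rfl
    rw [h', Prod.ext_iff]
    constructor <;> simp <;> omega
  rw [hmeq] at hmV
  have := hpmin q.1 hmV
  exact Prod.le_def.mpr ⟨by omega, by omega⟩

/-- A descent at a vertical-then-horizontal corner forces the corner cell to lie in `X`. -/
lemma cornerVH_cell (X : Finset (ℤ × ℤ)) (hpoly : IsPolyomino X) (hconv : IsConvexPoly X)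
    (hsub : ∀ a ∈ Verts X, ∀ b ∈ Verts X, a ⊔ b ∈ Verts X ∧ a ⊓ b ∈ Verts X)
    (ω : ℤ × ℤ → ℕ) (hω : OmegaOK X ω)
    {p q : ℤ × ℤ} {x y : ℤ}
    (hp : p ∈ JoinIrr X) (hq : q ∈ JoinIrr X)
    (h0 : ((x, y) : ℤ × ℤ) ∈ Verts X) (h1 : ((x, y + 1) : ℤ × ℤ) ∈ Verts X)
    (h2 : ((x + 1, y + 1) : ℤ × ℤ) ∈ Verts X)
    (hp1 : p ≤ ((x, y + 1) : ℤ × ℤ)) (hp2 : ¬ p ≤ ((x, y) : ℤ × ℤ))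
    (hq1 : q ≤ ((x + 1, y + 1) : ℤ × ℤ)) (hq2 : ¬ q ≤ ((x, y + 1) : ℤ × ℤ))
    (hlt : ω q < ω p) :
    ((x + 1, y + 1) : ℤ × ℤ) ∈ X := by
  obtain ⟨hpa, hpb, -⟩ := minV X hsub hp h0 hp1 hp2
  obtain ⟨hqa, hqb, -⟩ := minH X hsub hq h1 hq1 hq2
  -- q.2 ≤ y, else p ≤ q
  have hq2y : q.2 ≤ y := by
    by_contra hcon
    have hple : p ≤ q := Prod.le_def.mpr ⟨by omega, by omega⟩
    exact absurd (hω.2 p hp q hq hple) (by omega)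
  -- fourth corner (x+1, y) ∈ Verts X
  have h3 : ((x + 1, y) : ℤ × ℤ) ∈ Verts X := by
    have hjV := (hsub q hq.1 _ h0).1
    have hjeq : q ⊔ ((x, y) : ℤ × ℤ) = ((x + 1, y) : ℤ × ℤ) := by
      have h' : q ⊔ ((x, y) : ℤ × ℤ) = (q.1 ⊔ x, q.2 ⊔ y) := rfl
      rw [h', Prod.ext_iff]
      constructor <;> simp <;> omega
    rwa [hjeq] at hjV
  have := cell_mem X hpoly hconv (x + 1) (y + 1) h2
    (by rwa [show (x : ℤ) + 1 - 1 = x by ring])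
    (by rwa [show (y : ℤ) + 1 - 1 = y by ring])
    (by rwa [show (x : ℤ) + 1 - 1 = x by ring, show (y : ℤ) + 1 - 1 = y by ring])
  exact this

/-- A descent at a horizontal-then-vertical corner forces the corner cell to lie in `X`. -/
lemma cornerHV_cell (X : Finset (ℤ × ℤ)) (hpoly : IsPolyomino X) (hconv : IsConvexPoly X)
    (hsub : ∀ a ∈ Verts X, ∀ b ∈ Verts X, a ⊔ b ∈ Verts X ∧ a ⊓ b ∈ Verts X)
    (ω : ℤ × ℤ → ℕ) (hω : OmegaOK X ω)
    {p q : ℤ × ℤ} {x y : ℤ}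
    (hp : p ∈ JoinIrr X) (hq : q ∈ JoinIrr X)
    (h0 : ((x, y) : ℤ × ℤ) ∈ Verts X) (h1 : ((x + 1, y) : ℤ × ℤ) ∈ Verts X)
    (h2 : ((x + 1, y + 1) : ℤ × ℤ) ∈ Verts X)
    (hp1 : p ≤ ((x + 1, y) : ℤ × ℤ)) (hp2 : ¬ p ≤ ((x, y) : ℤ × ℤ))
    (hq1 : q ≤ ((x + 1, y + 1) : ℤ × ℤ)) (hq2 : ¬ q ≤ ((x + 1, y) : ℤ × ℤ))
    (hlt : ω q < ω p) :
    ((x + 1, y + 1) : ℤ × ℤ) ∈ X := by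
  obtain ⟨hpa, hpb, -⟩ := minH X hsub hp h0 hp1 hp2
  obtain ⟨hqa, hqb, -⟩ := minV X hsub hq h1 hq1 hq2
  have hq1x : q.1 ≤ x := by
    by_contra hcon
    have hple : p ≤ q := Prod.le_def.mpr ⟨by omega, by omega⟩
    exact absurd (hω.2 p hp q hq hple) (by omega)
  have h3 : ((x, y + 1) : ℤ × ℤ) ∈ Verts X := by
    have hjV := (hsub q hq.1 _ h0).1
    have hjeq : q ⊔ ((x, y) : ℤ × ℤ) = ((x, y + 1) : ℤ × ℤ) := by
      have h' : q ⊔ ((x, y) : ℤ × ℤ) = (q.1 ⊔ x, q.2 ⊔ y) := rfl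
      rw [h', Prod.ext_iff]
      constructor <;> simp <;> omega
    rwa [hjeq] at hjV
  exact cell_mem X hpoly hconv (x + 1) (y + 1) h2
    (by rwa [show (x : ℤ) + 1 - 1 = x by ring])
    (by rwa [show (y : ℤ) + 1 - 1 = y by ring])
    (by rwa [show (x : ℤ) + 1 - 1 = x by ring, show (y : ℤ) + 1 - 1 = y by ring])

/-- No two adjacent descents in a vertical-horizontal-vertical zigzag. -/
lemma noadjVHV (X : Finset (ℤ × ℤ))
    (hsub : ∀ a ∈ Verts X, ∀ b ∈ Verts X, a ⊔ b ∈ Verts X ∧ a ⊓ b ∈ Verts X)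
    (ω : ℤ × ℤ → ℕ) (hω : OmegaOK X ω)
    {p q p' q' : ℤ × ℤ} {x y : ℤ}
    (hp : p ∈ JoinIrr X) (hq : q ∈ JoinIrr X) (hp' : p' ∈ JoinIrr X) (hq' : q' ∈ JoinIrr X)
    (h0 : ((x, y) : ℤ × ℤ) ∈ Verts X) (h1 : ((x, y + 1) : ℤ × ℤ) ∈ Verts X)
    (h2 : ((x + 1, y + 1) : ℤ × ℤ) ∈ Verts X)
    (hp1 : p ≤ ((x, y + 1) : ℤ × ℤ)) (hp2 : ¬ p ≤ ((x, y) : ℤ × ℤ))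
    (hq1 : q ≤ ((x + 1, y + 1) : ℤ × ℤ)) (hq2 : ¬ q ≤ ((x, y + 1) : ℤ × ℤ))
    (hp'1 : p' ≤ ((x + 1, y + 1) : ℤ × ℤ)) (hp'2 : ¬ p' ≤ ((x, y + 1) : ℤ × ℤ))
    (hq'1 : q' ≤ ((x + 1, y + 2) : ℤ × ℤ)) (hq'2 : ¬ q' ≤ ((x + 1, y + 1) : ℤ × ℤ))
    (hlt1 : ω q < ω p) (hlt2 : ω q' < ω p') : False := by
  obtain ⟨hpa, hpb, hpmin⟩ := minV X hsub hp h0 hp1 hp2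
  obtain ⟨hqa, hqb, hqmin⟩ := minH X hsub hq h1 hq1 hq2
  obtain ⟨hp'a, hp'b, hp'min⟩ := minH X hsub hp' h1 hp'1 hp'2
  have hq'1' : q' ≤ ((x + 1, y + 1 + 1) : ℤ × ℤ) := by
    rwa [show (y : ℤ) + 1 + 1 = y + 2 by ring]
  obtain ⟨hq'a, hq'b, -⟩ := minV X hsub hq' h2 hq'1' hq'2
  -- p' = q
  have hqp' : q = p' := by
    have e1 : p' = ((x + 1, p'.2) : ℤ × ℤ) := Prod.ext_iff.mpr ⟨hp'a, rfl⟩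
    have e2 : q = ((x + 1, q.2) : ℤ × ℤ) := Prod.ext_iff.mpr ⟨hqa, rfl⟩
    have l1 : q.2 ≤ p'.2 := hqmin p'.2 (by rw [← e1]; exact hp'.1)
    have l2 : p'.2 ≤ q.2 := hp'min q.2 (by rw [← e2]; exact hq.1)
    exact Prod.ext_iff.mpr ⟨by omega, by omega⟩
  -- p ≤ q'
  have hmV := (hsub q' hq'.1 _ h2).2
  have hmeq : q' ⊓ ((x + 1, y + 1) : ℤ × ℤ) = ((q'.1, y + 1) : ℤ × ℤ) := by
    have h' : q' ⊓ ((x + 1, y + 1) : ℤ × ℤ) = (q'.1 ⊓ (x + 1), q'.2 ⊓ (y + 1)) := rfl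
    rw [h', Prod.ext_iff]
    constructor <;> simp <;> omega
  rw [hmeq] at hmV
  have hpq' : p ≤ q' := Prod.le_def.mpr ⟨by have := hpmin q'.1 hmV; omega, by omega⟩
  have := hω.2 p hp q' hq' hpq'
  rw [hqp'] at hlt1
  omega

/-- No two adjacent descents in a horizontal-vertical-horizontal zigzag. -/
lemma noadjHVH (X : Finset (ℤ × ℤ))
    (hsub : ∀ a ∈ Verts X, ∀ b ∈ Verts X, a ⊔ b ∈ Verts X ∧ a ⊓ b ∈ Verts X)
    (ω : ℤ × ℤ → ℕ) (hω : OmegaOK X ω)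
    {p q p' q' : ℤ × ℤ} {x y : ℤ}
    (hp : p ∈ JoinIrr X) (hq : q ∈ JoinIrr X) (hp' : p' ∈ JoinIrr X) (hq' : q' ∈ JoinIrr X)
    (h0 : ((x, y) : ℤ × ℤ) ∈ Verts X) (h1 : ((x + 1, y) : ℤ × ℤ) ∈ Verts X)
    (h2 : ((x + 1, y + 1) : ℤ × ℤ) ∈ Verts X)
    (hp1 : p ≤ ((x + 1, y) : ℤ × ℤ)) (hp2 : ¬ p ≤ ((x, y) : ℤ × ℤ))
    (hq1 : q ≤ ((x + 1, y + 1) : ℤ × ℤ)) (hq2 : ¬ q ≤ ((x + 1, y) : ℤ × ℤ))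
    (hp'1 : p' ≤ ((x + 1, y + 1) : ℤ × ℤ)) (hp'2 : ¬ p' ≤ ((x + 1, y) : ℤ × ℤ))
    (hq'1 : q' ≤ ((x + 2, y + 1) : ℤ × ℤ)) (hq'2 : ¬ q' ≤ ((x + 1, y + 1) : ℤ × ℤ))
    (hlt1 : ω q < ω p) (hlt2 : ω q' < ω p') : False := by
  obtain ⟨hpa, hpb, hpmin⟩ := minH X hsub hp h0 hp1 hp2
  obtain ⟨hqa, hqb, hqmin⟩ := minV X hsub hq h1 hq1 hq2
  obtain ⟨hp'a, hp'b, hp'min⟩ := minV X hsub hp' h1 hp'1 hp'2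
  have hq'1' : q' ≤ ((x + 1 + 1, y + 1) : ℤ × ℤ) := by
    rwa [show (x : ℤ) + 1 + 1 = x + 2 by ring]
  obtain ⟨hq'a, hq'b, -⟩ := minH X hsub hq' h2 hq'1' hq'2
  have hqp' : q = p' := by
    have e1 : p' = ((p'.1, y + 1) : ℤ × ℤ) := Prod.ext_iff.mpr ⟨rfl, hp'a⟩
    have e2 : q = ((q.1, y + 1) : ℤ × ℤ) := Prod.ext_iff.mpr ⟨rfl, hqa⟩
    have l1 : q.1 ≤ p'.1 := hqmin p'.1 (by rw [← e1]; exact hp'.1)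
    have l2 : p'.1 ≤ q.1 := hp'min q.1 (by rw [← e2]; exact hq.1)
    exact Prod.ext_iff.mpr ⟨by omega, by omega⟩
  have hmV := (hsub q' hq'.1 _ h2).2
  have hmeq : q' ⊓ ((x + 1, y + 1) : ℤ × ℤ) = ((x + 1, q'.2) : ℤ × ℤ) := by
    have h' : q' ⊓ ((x + 1, y + 1) : ℤ × ℤ) = (q'.1 ⊓ (x + 1), q'.2 ⊓ (y + 1)) := rfl
    rw [h', Prod.ext_iff]
    constructor <;> simp <;> omega
  rw [hmeq] at hmV
  have hpq' : p ≤ q' := Prod.le_def.mpr ⟨by omega, by have := hpmin q'.2 hmV; omega⟩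
  have := hω.2 p hp q' hq' hpq'
  rw [hqp'] at hlt1
  omega

theorem psi_is_rook_config (X : Finset (ℤ × ℤ)) (m n : ℕ)
    (hpoly : IsPolyomino X) (hconv : IsConvexPoly X)
    (hlat : LatticeSetup X m n)
    (ω : ℤ × ℤ → ℕ) (hω : OmegaOK X ω)
    (μ : ℕ → ℤ × ℤ) (hμ : IsMaxChainPath X m n μ)
    (k : ℕ) (hk : (Des X m n ω μ).ncard = k) :
    psi X m n ω μ ⊆ (↑X : Set (ℤ × ℤ)) ∧ (psi X m n ω μ).ncard = k ∧
      ∀ c ∈ psi X m n ω μ, ∀ d ∈ psi X m n ω μ, c ≠ d → c.1 ≠ d.1 ∧ c.2 ≠ d.2 := by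
  obtain ⟨h00, hstep, hbig, hV⟩ := hμ
  have hsub := hlat.1
  -- component form of the steps
  have hcomp : ∀ i, i < m + n →
      ((μ (i + 1)).1 = (μ i).1 + 1 ∧ (μ (i + 1)).2 = (μ i).2) ∨
      ((μ (i + 1)).1 = (μ i).1 ∧ (μ (i + 1)).2 = (μ i).2 + 1) := by
    intro i hi
    rcases hstep i hi with h | h
    · left
      have h1 := congrArg Prod.fst h
      have h2 := congrArg Prod.snd h
      simp [Prod.fst_sub, Prod.snd_sub] at h1 h2
      omega
    · right
      have h1 := congrArg Prod.fst h
      have h2 := congrArg Prod.snd h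
      simp [Prod.fst_sub, Prod.snd_sub] at h1 h2
      omega
  -- coordinate sums
  have hsum : ∀ i, i ≤ m + n → (μ i).1 + (μ i).2 = i := by
    intro i
    induction i with
    | zero => intro _; rw [h00]; simp
    | succ i ih =>
      intro hi
      have := ih (by omega)
      rcases hcomp i (by omega) with ⟨e1, e2⟩ | ⟨e1, e2⟩ <;> omega
  -- coordinatewise monotonicity
  have hmono : ∀ i j, i ≤ j → j ≤ m + n →
      (μ i).1 ≤ (μ j).1 ∧ (μ i).2 ≤ (μ j).2 := by
    intro i j hij hj
    induction j with
    | zero =>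
      have h0' : i = 0 := Nat.le_zero.mp hij
      subst h0'
      exact ⟨le_rfl, le_rfl⟩
    | succ j ih =>
      rcases Nat.eq_or_lt_of_le hij with rfl | hlt
      · omega
      · have := ih (by omega) (by omega)
        rcases hcomp j (by omega) with ⟨e1, e2⟩ | ⟨e1, e2⟩ <;> omega
  -- structure at a descent
  have hshape : ∀ j, j + 1 < m + n → DescentAt X ω μ (j + 1) →
      μ (j + 2) ∈ X ∧ (μ (j + 2)).1 = (μ j).1 + 1 ∧ (μ (j + 2)).2 = (μ j).2 + 1 := by
    intro j hj hd
    obtain ⟨p, hp, q, hq, hp1, hp2, hq1, hq2, hlt⟩ := hd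
    simp only [Nat.add_sub_cancel] at hp2
    have c1 := hcomp j (by omega)
    have c2 := hcomp (j + 1) hj
    simp only [show j + 1 + 1 = j + 2 by omega] at c2
    have ej : μ j = (((μ j).1, (μ j).2) : ℤ × ℤ) := by simp
    have hVj := hV j (by omega)
    have hVj1 := hV (j + 1) (by omega)
    have hVj2 := hV (j + 2) (by omega)
    rcases c1 with ⟨e1, e2⟩ | ⟨e1, e2⟩ <;> rcases c2 with ⟨f1, f2⟩ | ⟨f1, f2⟩
    · -- H, H : impossible
      exfalso
      have ej1 : μ (j + 1) = (((μ j).1 + 1, (μ j).2) : ℤ × ℤ) :=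
        Prod.ext_iff.mpr ⟨by omega, by omega⟩
      have ej2 : μ (j + 2) = (((μ j).1 + 2, (μ j).2) : ℤ × ℤ) :=
        Prod.ext_iff.mpr ⟨by omega, by omega⟩
      rw [ej] at hp2
      rw [ej1] at hp1 hq2
      rw [ej2] at hq1
      have := hω.2 p hp q hq
        (stepH_le X hsub hp hq (ej ▸ hVj) (ej1 ▸ hVj1) hp1 hp2 hq1 hq2)
      omega
    · -- H, V : corner
      have ej1 : μ (j + 1) = (((μ j).1 + 1, (μ j).2) : ℤ × ℤ) :=
        Prod.ext_iff.mpr ⟨by omega, by omega⟩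
      have ej2 : μ (j + 2) = (((μ j).1 + 1, (μ j).2 + 1) : ℤ × ℤ) :=
        Prod.ext_iff.mpr ⟨by omega, by omega⟩
      refine ⟨?_, by omega, by omega⟩
      rw [ej] at hp2
      rw [ej1] at hp1 hq2
      rw [ej2] at hq1
      rw [ej2]
      exact cornerHV_cell X hpoly hconv hsub ω hω hp hq (ej ▸ hVj) (ej1 ▸ hVj1)
        (ej2 ▸ hVj2) hp1 hp2 hq1 hq2 hlt
    · -- V, H : corner
      have ej1 : μ (j + 1) = (((μ j).1, (μ j).2 + 1) : ℤ × ℤ) :=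
        Prod.ext_iff.mpr ⟨by omega, by omega⟩
      have ej2 : μ (j + 2) = (((μ j).1 + 1, (μ j).2 + 1) : ℤ × ℤ) :=
        Prod.ext_iff.mpr ⟨by omega, by omega⟩
      refine ⟨?_, by omega, by omega⟩
      rw [ej] at hp2
      rw [ej1] at hp1 hq2
      rw [ej2] at hq1
      rw [ej2]
      exact cornerVH_cell X hpoly hconv hsub ω hω hp hq (ej ▸ hVj) (ej1 ▸ hVj1)
        (ej2 ▸ hVj2) hp1 hp2 hq1 hq2 hlt
    · -- V, V : impossible
      exfalso
      have ej1 : μ (j + 1) = (((μ j).1, (μ j).2 + 1) : ℤ × ℤ) :=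
        Prod.ext_iff.mpr ⟨by omega, by omega⟩
      have ej2 : μ (j + 2) = (((μ j).1, (μ j).2 + 2) : ℤ × ℤ) :=
        Prod.ext_iff.mpr ⟨by omega, by omega⟩
      rw [ej] at hp2
      rw [ej1] at hp1 hq2
      rw [ej2] at hq1
      have := hω.2 p hp q hq
        (stepV_le X hsub hp hq (ej ▸ hVj) (ej1 ▸ hVj1) hp1 hp2 hq1 hq2)
      omega
  -- key rook lemma
  have key : ∀ i j : ℕ, i ∈ Des X m n ω μ → j ∈ Des X m n ω μ → i < j →
      (μ (i + 1)).1 ≠ (μ (j + 1)).1 ∧ (μ (i + 1)).2 ≠ (μ (j + 1)).2 := by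
    intro i j hiD hjD hij
    obtain ⟨hi1, hi2, hdi⟩ := hiD
    obtain ⟨hj1, hj2, hdj⟩ := hjD
    obtain ⟨i', rfl⟩ : ∃ i', i = i' + 1 := ⟨i - 1, by omega⟩
    obtain ⟨j', rfl⟩ : ∃ j', j = j' + 1 := ⟨j - 1, by omega⟩
    have Hi := hshape i' (by omega) hdi
    have Hj := hshape j' (by omega) hdj
    simp only [show i' + 1 + 1 = i' + 2 by omega, show j' + 1 + 1 = j' + 2 by omega]
    by_cases hadj : j' = i' + 1
    · subst hadj
      simp only [show i' + 1 + 2 = i' + 3 by omega] at Hj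
      -- unpack descent data
      obtain ⟨p, hp, q, hq, hp1, hp2, hq1', hq2', hlt⟩ := hdi
      simp only [Nat.add_sub_cancel, show i' + 1 + 1 = i' + 2 by omega] at hp2 hq1' hq2'
      obtain ⟨p', hp', q', hq', hp'1, hp'2, hq'1, hq'2, hlt'⟩ := hdj
      simp only [Nat.add_sub_cancel, show i' + 1 + 1 = i' + 2 by omega,
        show i' + 1 + 1 + 1 = i' + 3 by omega,
        show i' + 2 - 1 = i' + 1 by omega] at hp'1 hp'2 hq'1 hq'2
      have c1 := hcomp i' (by omega)
      have c2 := hcomp (i' + 1) (by omega)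
      simp only [show i' + 1 + 1 = i' + 2 by omega] at c2
      constructor
      · intro heq
        simp only [show i' + 1 + 2 = i' + 3 by omega] at heq
        -- pattern V, H, V
        have e0 : μ i' = (((μ i').1, (μ i').2) : ℤ × ℤ) := by simp
        have e1 : μ (i' + 1) = (((μ i').1, (μ i').2 + 1) : ℤ × ℤ) :=
          Prod.ext_iff.mpr ⟨by omega, by omega⟩
        have e2 : μ (i' + 2) = (((μ i').1 + 1, (μ i').2 + 1) : ℤ × ℤ) :=
          Prod.ext_iff.mpr ⟨by omega, by omega⟩
        have e3 : μ (i' + 3) = (((μ i').1 + 1, (μ i').2 + 2) : ℤ × ℤ) :=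
          Prod.ext_iff.mpr ⟨by omega, by omega⟩
        rw [e0] at hp2
        rw [e1] at hp1 hq2' hp'2
        rw [e2] at hq1' hp'1 hq'2
        rw [e3] at hq'1
        exact noadjVHV X hsub ω hω hp hq hp' hq' (e0 ▸ hV i' (by omega))
          (e1 ▸ hV (i' + 1) (by omega)) (e2 ▸ hV (i' + 2) (by omega))
          hp1 hp2 hq1' hq2' hp'1 hp'2 hq'1 hq'2 hlt hlt'
      · intro heq
        simp only [show i' + 1 + 2 = i' + 3 by omega] at heq
        -- pattern H, V, H
        have e0 : μ i' = (((μ i').1, (μ i').2) : ℤ × ℤ) := by simp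
        have e1 : μ (i' + 1) = (((μ i').1 + 1, (μ i').2) : ℤ × ℤ) :=
          Prod.ext_iff.mpr ⟨by omega, by omega⟩
        have e2 : μ (i' + 2) = (((μ i').1 + 1, (μ i').2 + 1) : ℤ × ℤ) :=
          Prod.ext_iff.mpr ⟨by omega, by omega⟩
        have e3 : μ (i' + 3) = (((μ i').1 + 2, (μ i').2 + 1) : ℤ × ℤ) :=
          Prod.ext_iff.mpr ⟨by omega, by omega⟩
        rw [e0] at hp2
        rw [e1] at hp1 hq2' hp'2
        rw [e2] at hq1' hp'1 hq'2
        rw [e3] at hq'1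
        exact noadjHVH X hsub ω hω hp hq hp' hq' (e0 ▸ hV i' (by omega))
          (e1 ▸ hV (i' + 1) (by omega)) (e2 ▸ hV (i' + 2) (by omega))
          hp1 hp2 hq1' hq2' hp'1 hp'2 hq'1 hq'2 hlt hlt'
    · -- non-adjacent: monotonicity
      have hle : i' + 2 ≤ j' := by omega
      have hm := hmono (i' + 2) j' hle (by omega)
      constructor
      · intro heq
        omega
      · intro heq
        omega
  refine ⟨?_, ?_, ?_⟩
  · rintro c ⟨i, hi, rfl⟩
    obtain ⟨hi1, hi2, hdi⟩ := hi
    obtain ⟨i', rfl⟩ : ∃ i', i = i' + 1 := ⟨i - 1, by omega⟩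
    have := (hshape i' (by omega) hdi).1
    simpa [show i' + 1 + 1 = i' + 2 by omega] using this
  · rw [← hk]
    apply Set.ncard_image_of_injOn
    intro i hi j hj hij
    obtain ⟨-, hi2, -⟩ := hi
    obtain ⟨-, hj2, -⟩ := hj
    have hij' : μ (i + 1) = μ (j + 1) := hij
    have e1 := hsum (i + 1) (by omega)
    have e2 := hsum (j + 1) (by omega)
    rw [hij'] at e1
    omega
  · rintro c ⟨i, hiD, rfl⟩ d ⟨j, hjD, rfl⟩ hne
    rcases lt_trichotomy i j with h | rfl | h
    · exact key i j hiD hjD h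
    · exact absurd rfl hne
    · obtain ⟨ha, hb⟩ := key j i hjD hiD h
      exact ⟨Ne.symm ha, Ne.symm hb⟩
end
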